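/- arXiv:1512.01669 — 11 statements merged into one kernel-verified Lean document; each statement's English description precedes it below -/
import Mathlib

section
/- Let $A$ be a unital C*-algebra and $S, T \subseteq \mathbb{C}$ compact sets. Composing with the two coordinate projections $p_S : S \times T \to S$ and $p_T : S \times T \to T$ establishes a bijection between unital $*$-homomorphisms $C(S \times T) \to A$ and pairs $(\alpha, \beta)$ of commuting normal elements of $A$ with $\mathrm{spec}(\alpha) \subseteq S$ and $\mathrm{spec}(\beta) \subseteq T$. -/
/-!
Injectivity is Stone–Weierstrass: the two coordinate functions separate the points of `S × T`,
so they generate a dense `⋆`-subalgebra of `C(S × T, ℂ)`, and `⋆`-homomorphisms into a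
C⋆-algebra are continuous. For surjectivity, Fuglede's theorem makes `α`, `β`, `α⋆`, `β⋆`
commute pairwise, so the C⋆-algebra `B` generated by `α` and `β` is commutative. Gelfand duality
identifies `B` with `C(Δ, ℂ)` for its character space `Δ`, and the required homomorphism is
composition with `χ ↦ (χ α, χ β) : Δ → S × T`, which lands in `S × T` by spectral permanence.
-/

open WeakDual
open scoped IsMulCommutative CStarAlgebra

namespace ContinuousMap

theorem starAlgHom_ext_of_separatesPoints {X 𝕜 A : Type*} [TopologicalSpace X] [CompactSpace X]
    [RCLike 𝕜] [Ring A] [StarRing A] [Algebra 𝕜 A] [TopologicalSpace A] [T2Space A]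
    {s : Set C(X, 𝕜)} (hs : (StarAlgebra.adjoin 𝕜 s).SeparatesPoints)
    {φ ψ : C(X, 𝕜) →⋆ₐ[𝕜] A} (hφ : Continuous φ) (hψ : Continuous ψ) (h : s.EqOn φ ψ) :
    φ = ψ := by
  suffices (⊤ : StarSubalgebra 𝕜 C(X, 𝕜)) ≤ StarAlgHom.equalizer φ ψ from
    StarAlgHom.ext fun f => this StarSubalgebra.mem_top
  rw [← starSubalgebra_topologicalClosure_eq_top_of_separatesPoints _ hs]
  exact StarSubalgebra.topologicalClosure_minimal
    (StarAlgHom.adjoin_le_equalizer φ ψ h) (isClosed_eq hφ hψ)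

theorem spectrum_algHom_apply_subset_range {X 𝕜 A : Type*} [TopologicalSpace X] [NormedField 𝕜]
    [CompleteSpace 𝕜] [Ring A] [Algebra 𝕜 A] (γ : C(X, 𝕜) →ₐ[𝕜] A) (f : C(X, 𝕜)) :
    spectrum 𝕜 (γ f) ⊆ Set.range f :=
  (AlgHom.spectrum_apply_subset γ f).trans (spectrum_eq_range f).subset

section Coordinates

variable {𝕜 : Type*} [RCLike 𝕜] (S T : Set 𝕜)

def valFst : C(S × T, 𝕜) := ⟨fun p => (p.1 : 𝕜), continuous_subtype_val.comp continuous_fst⟩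

def valSnd : C(S × T, 𝕜) := ⟨fun p => (p.2 : 𝕜), continuous_subtype_val.comp continuous_snd⟩

theorem separatesPoints_adjoin_valFst_valSnd :
    (StarAlgebra.adjoin 𝕜 {valFst S T, valSnd S T}).SeparatesPoints := by
  intro x y hxy
  by_cases hfst : (x.1 : 𝕜) = y.1
  · have hsnd : (x.2 : 𝕜) ≠ y.2 := fun hsnd =>
      hxy (Prod.ext (Subtype.ext hfst) (Subtype.ext hsnd))
    exact ⟨_, ⟨valSnd S T, StarAlgebra.subset_adjoin 𝕜 _ (by simp), rfl⟩, hsnd⟩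
  · exact ⟨_, ⟨valFst S T, StarAlgebra.subset_adjoin 𝕜 _ (by simp), rfl⟩, hfst⟩

end Coordinates

end ContinuousMap

open ContinuousMap

theorem CommCStarAlgebra.exists_starAlgHom_valFst_valSnd {B : Type*} [CommCStarAlgebra B]
    {a b : B} {S T : Set ℂ} (ha : spectrum ℂ a ⊆ S) (hb : spectrum ℂ b ⊆ T) :
    ∃ γ : C(S × T, ℂ) →⋆ₐ[ℂ] B, γ (valFst S T) = a ∧ γ (valSnd S T) = b := by
  let φ : C(characterSpace ℂ B, S × T) :=
    ⟨fun χ => (⟨χ a, ha (AlgHom.apply_mem_spectrum χ a)⟩,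
        ⟨χ b, hb (AlgHom.apply_mem_spectrum χ b)⟩),
      ((gelfandTransform ℂ B a).continuous.subtype_mk _).prodMk
        ((gelfandTransform ℂ B b).continuous.subtype_mk _)⟩
  refine ⟨((gelfandStarTransform B).symm : _ →⋆ₐ[ℂ] B).comp (compStarAlgHom' ℂ ℂ φ), ?_, ?_⟩
  · exact (gelfandStarTransform B).symm_apply_apply a
  · exact (gelfandStarTransform B).symm_apply_apply b

theorem IsStarNormal.exists_starAlgHom_valFst_valSnd {A : Type*} [CStarAlgebra A] {a b : A}
    (ha : IsStarNormal a) (hb : IsStarNormal b) (hab : Commute a b) {S T : Set ℂ}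
    (haS : spectrum ℂ a ⊆ S) (hbT : spectrum ℂ b ⊆ T) :
    ∃ γ : C(S × T, ℂ) →⋆ₐ[ℂ] A, γ (valFst S T) = a ∧ γ (valSnd S T) = b := by
  let B : StarSubalgebra ℂ A := (StarAlgebra.adjoin ℂ {a, b}).topologicalClosure
  have hab_star : Commute a (star b) := hb.commute_star_right hab
  have hba_star : Commute b (star a) := ha.commute_star_right hab.symm
  have : IsMulCommutative (StarAlgebra.adjoin ℂ {a, b}) :=
    StarAlgebra.isMulCommutative_adjoin ℂ (by grind) (by grind [star_comm_self'])
  let _ : CommRing B := (StarAlgebra.adjoin ℂ {a, b}).commRingTopologicalClosure mul_comm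
  let _ : CommCStarAlgebra B := { }
  have : IsClosed (B : Set A) := StarSubalgebra.isClosed_topologicalClosure _
  have haB : a ∈ B :=
    StarSubalgebra.le_topologicalClosure _ (StarAlgebra.subset_adjoin ℂ _ (by simp))
  have hbB : b ∈ B :=
    StarSubalgebra.le_topologicalClosure _ (StarAlgebra.subset_adjoin ℂ _ (by simp))
  obtain ⟨γ, hγa, hγb⟩ := CommCStarAlgebra.exists_starAlgHom_valFst_valSnd
    (a := (⟨a, haB⟩ : B)) (b := (⟨b, hbB⟩ : B))
    ((StarSubalgebra.spectrum_eq B).trans_subset haS)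
    ((StarSubalgebra.spectrum_eq B).trans_subset hbT)
  exact ⟨B.subtype.comp γ, congr_arg Subtype.val hγa, congr_arg Subtype.val hγb⟩

/-- For a unital C*-algebra `A` and compact sets `S, T ⊆ ℂ`, composing with the
coordinate projections gives a bijection between unital `*`-homomorphisms `C(S × T) → A` and
pairs of commuting normal elements with spectra in `S` and `T` respectively. -/
theorem stmt1 (A : Type*) [NormedRing A] [StarRing A] [CStarRing A]
    [NormedAlgebra ℂ A] [StarModule ℂ A] [CompleteSpace A]
    (S T : Set ℂ) (hS : IsCompact S) (hT : IsCompact T) :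
    Set.BijOn
      (fun γ : C(S × T, ℂ) →⋆ₐ[ℂ] A =>
        (γ (ContinuousMap.mk (fun p => (p.1 : ℂ))
              (continuous_subtype_val.comp continuous_fst)),
         γ (ContinuousMap.mk (fun p => (p.2 : ℂ))
              (continuous_subtype_val.comp continuous_snd))))
      Set.univ
      {p : A × A | Commute p.1 p.2 ∧ IsStarNormal p.1 ∧ IsStarNormal p.2 ∧
        spectrum ℂ p.1 ⊆ S ∧ spectrum ℂ p.2 ⊆ T} := by
  let _ : CStarAlgebra A := { }
  have : CompactSpace S := isCompact_iff_compactSpace.mp hS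
  have : CompactSpace T := isCompact_iff_compactSpace.mp hT
  refine ⟨fun γ _ => ?_, fun γ₁ _ γ₂ _ hγ => ?_, fun p ⟨hab, ha, hb, haS, hbT⟩ => ?_⟩
  · exact ⟨(Commute.all _ _).map γ, .map γ _, .map γ _,
      (spectrum_algHom_apply_subset_range (γ : _ →ₐ[ℂ] A) (valFst S T)).trans
        (Set.range_subset_iff.2 fun q => q.1.2),
      (spectrum_algHom_apply_subset_range (γ : _ →ₐ[ℂ] A) (valSnd S T)).trans
        (Set.range_subset_iff.2 fun q => q.2.2)⟩
  · refine starAlgHom_ext_of_separatesPoints (separatesPoints_adjoin_valFst_valSnd S T)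
      (map_continuous γ₁) (map_continuous γ₂) ?_
    rintro f (rfl | rfl)
    exacts [congr_arg Prod.fst hγ, congr_arg Prod.snd hγ]
  · obtain ⟨γ, hγa, hγb⟩ := ha.exists_starAlgHom_valFst_valSnd hb hab haS hbT
    exact ⟨γ, trivial, Prod.ext hγa hγb⟩
end

section
/- Let $X$ be a compact Hausdorff space and let $v : C(X, \Box) \to \Box$ (where $\Box = [0,1]^2$) be a function satisfying the naturality condition $v(h \circ f) = h(v(f))$ for all continuous $f : X \to \Box$ and all continuous $h : \Box \to \Box$. Then there exists a point $x \in X$ such that $v(f) = f(x)$ for all continuous $f : X \to \Box$. -/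
open unitInterval

/-- If `X` is a nonempty compact Hausdorff space and
`v : C(X, □) → □` (with `□ = [0,1]²`) satisfies `v(h ∘ f) = h(v f)` for all continuous
`f : X → □` and `h : □ → □`, then there is a point `x ∈ X` with `v f = f x` for all `f`. -/
theorem stmt2 (X : Type*) [TopologicalSpace X] [CompactSpace X] [T2Space X] [Nonempty X]
    (v : C(X, I × I) → I × I)
    (hv : ∀ (f : C(X, I × I)) (h : C(I × I, I × I)), v (h.comp f) = h (v f)) :
    ∃ x : X, ∀ f : C(X, I × I), v f = f x := by
  classical
  -- diagonal embedding and the scalar functional `w`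
  set D : C(X, I) → C(X, I × I) := fun g => ⟨fun x => (g x, g x), by fun_prop⟩ with hD
  set w : C(X, I) → I := fun g => (v (D g)).1 with hw
  -- master naturality lemma for `w`
  have key : ∀ (c : C(X, I)) (F : C(X, I × I)) (h : C(I × I, I)),
      (∀ x, c x = h (F x)) → w c = h (v F) := by
    intro c F h hc
    have h1 : D c = (⟨fun p => (h p, h p), by fun_prop⟩ : C(I × I, I × I)).comp F := by
      ext x
      · simp [hD, hc x]
      · simp [hD, hc x]
    rw [hw]
    simp only [h1, hv]
    rfl
  -- `w` determines `v`
  have hfst : ∀ F : C(X, I × I), w ⟨fun x => (F x).1, by fun_prop⟩ = (v F).1 :=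
    fun F => key _ F ⟨fun p => p.1, by fun_prop⟩ (fun x => rfl)
  have hsnd : ∀ F : C(X, I × I), w ⟨fun x => (F x).2, by fun_prop⟩ = (v F).2 :=
    fun F => key _ F ⟨fun p => p.2, by fun_prop⟩ (fun x => rfl)
  -- unary naturality
  have huni : ∀ (g : C(X, I)) (h : C(I, I)),
      w ⟨fun x => h (g x), by fun_prop⟩ = h (w g) := by
    intro g h
    have := key ⟨fun x => h (g x), by fun_prop⟩ (D g) ⟨fun p => h p.1, by fun_prop⟩
      (fun x => rfl)
    simpa [hw] using this
  -- `w g` is a value of `g`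
  have hpoint : ∀ g : C(X, I), ∃ x, g x = w g := by
    intro g
    by_contra hcon
    push_neg at hcon
    have hK : IsClosed (Set.range g) := (isCompact_range g.continuous).isClosed
    have hdis : Disjoint (Set.range g) {w g} := by
      rw [Set.disjoint_singleton_right]
      rintro ⟨x, hx⟩
      exact hcon x hx
    obtain ⟨φ, hφ0, hφ1, hφmem⟩ :=
      exists_continuous_zero_one_of_isClosed hK isClosed_singleton hdis
    obtain ⟨q, hq⟩ := exists_ne (w g)
    set h : C(I, I) := ⟨fun t => ⟨(1 - φ t) * t + φ t * q, by
        obtain ⟨h0, h1⟩ := hφmem t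
        obtain ⟨t0, t1⟩ := t.2
        obtain ⟨q0, q1⟩ := q.2
        constructor
        · nlinarith [mul_nonneg (sub_nonneg.mpr h1) t0, mul_nonneg h0 q0]
        · nlinarith [mul_le_mul_of_nonneg_left t1 (sub_nonneg.mpr h1),
            mul_le_mul_of_nonneg_left q1 h0]⟩, by
      apply Continuous.subtype_mk
      fun_prop⟩ with hh
    have e1 : (⟨fun x => h (g x), by fun_prop⟩ : C(X, I)) = g := by
      ext x
      have : φ (g x) = 0 := hφ0 (Set.mem_range_self x)
      simp [hh, this]
    have e2 := huni g h
    rw [e1] at e2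
    have hφw : φ (w g) = 1 := hφ1 rfl
    have : w g = q := by
      rw [e2]
      ext
      simp [hh, hφw]
    exact hq this.symm
  -- the family of fibers
  set K : C(X, I) → Set X := fun g => {x | g x = w g} with hKdef
  have hKcl : ∀ g, IsClosed (K g) := fun g =>
    isClosed_singleton.preimage g.continuous
  have hKne : ∀ g, (K g).Nonempty := fun g => hpoint g
  -- directedness
  have hdir : Directed (· ⊇ ·) K := by
    intro g₁ g₂
    have habs : ∀ (s t : I), |(s : ℝ) - t| ≤ 1 := by
      intro s t
      rw [abs_sub_le_iff]
      constructor <;> [skip; skip] <;>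
        · obtain ⟨s0, s1⟩ := s.2; obtain ⟨t0, t1⟩ := t.2; linarith
    set hm : C(I × I, I) := ⟨fun p =>
        ⟨max |(p.1 : ℝ) - w g₁| |(p.2 : ℝ) - w g₂|, by
          constructor
          · exact le_trans (abs_nonneg _) (le_max_left _ _)
          · exact max_le (habs _ _) (habs _ _)⟩, by
      apply Continuous.subtype_mk
      fun_prop⟩ with hhm
    set F : C(X, I × I) := ⟨fun x => (g₁ x, g₂ x), by fun_prop⟩ with hF
    set c : C(X, I) := ⟨fun x => hm (F x), by fun_prop⟩ with hc
    have hv1 : (v F).1 = w g₁ := (key g₁ F ⟨fun p => p.1, by fun_prop⟩ (fun x => rfl)).symm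
    have hv2 : (v F).2 = w g₂ := (key g₂ F ⟨fun p => p.2, by fun_prop⟩ (fun x => rfl)).symm
    have hwc : w c = hm (v F) := key c F hm (fun x => rfl)
    have hwc0 : (w c : ℝ) = 0 := by
      have : v F = (w g₁, w g₂) := Prod.ext hv1 hv2
      rw [hwc, this]
      simp [hhm]
    refine ⟨c, ?_, ?_⟩
    · intro x hx
      have hx0 : (c x : ℝ) = 0 := by
        rw [hKdef] at hx
        rw [Set.mem_setOf_eq] at hx
        rw [hx, hwc0]
      have : |(g₁ x : ℝ) - w g₁| = 0 := le_antisymm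
        (by calc |(g₁ x : ℝ) - w g₁| ≤ _ := le_max_left _ _
            _ = 0 := hx0) (abs_nonneg _)
      have := sub_eq_zero.mp (abs_eq_zero.mp this)
      exact Subtype.ext this
    · intro x hx
      have hx0 : (c x : ℝ) = 0 := by
        rw [hKdef] at hx
        rw [Set.mem_setOf_eq] at hx
        rw [hx, hwc0]
      have : |(g₂ x : ℝ) - w g₂| = 0 := le_antisymm
        (by calc |(g₂ x : ℝ) - w g₂| ≤ _ := le_max_right _ _
            _ = 0 := hx0) (abs_nonneg _)
      have := sub_eq_zero.mp (abs_eq_zero.mp this)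
      exact Subtype.ext this
  have : Nonempty (C(X, I)) := ⟨ContinuousMap.const X 0⟩
  obtain ⟨x, hx⟩ := IsCompact.nonempty_iInter_of_directed_nonempty_isCompact_isClosed
    K hdir hKne (fun g => (hKcl g).isCompact) hKcl
  refine ⟨x, fun F => ?_⟩
  have hxg : ∀ g : C(X, I), g x = w g := by
    intro g
    exact Set.mem_iInter.mp hx g
  refine Prod.ext ?_ ?_
  · rw [← hfst F]
    exact (hxg ⟨fun x => (F x).1, by fun_prop⟩).symm
  · rw [← hsnd F]
    exact (hxg ⟨fun x => (F x).2, by fun_prop⟩).symm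
end

section
/- Let $X$ be a compact Hausdorff space, $v : C(X, \Box) \to \Box$ a function satisfying $v(h \circ f) = h(v(f))$ for all continuous $f : X \to \Box$ and $h : \Box \to \Box$, where $\Box = [0,1]^2$. Then for every continuous $f : X \to \Box$, the value $v(f)$ lies in the image of $f$, i.e. $f^{-1}(\{v(f)\})$ is nonempty. -/
open unitInterval

/-- If `X` is a compact Hausdorff space and `v : C(X, □) → □` (with `□ = [0,1]²`)
satisfies `v(h ∘ f) = h(v f)` for all continuous `f : X → □` and `h : □ → □`, then for every
continuous `f : X → □` the value `v f` lies in the image of `f`. -/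
theorem stmt3 (X : Type*) [TopologicalSpace X] [CompactSpace X] [T2Space X]
    (v : C(X, I × I) → I × I)
    (hv : ∀ (f : C(X, I × I)) (h : C(I × I, I × I)), v (h.comp f) = h (v f)) :
    ∀ f : C(X, I × I), ∃ x : X, f x = v f := by
  intro f
  by_contra hc
  push_neg at hc
  have hdisj : Disjoint (Set.range f) {v f} := by
    rw [Set.disjoint_singleton_right]
    rintro ⟨x, hx⟩
    exact hc x hx
  obtain ⟨g, hg0, hg1, hg01⟩ := exists_continuous_zero_one_of_isClosed
    (IsCompact.isClosed (isCompact_range f.continuous)) isClosed_singleton hdisj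
  set h : C(I × I, I × I) :=
    ⟨fun t => (⟨g t, hg01 t⟩, 0), by fun_prop⟩ with hh
  -- v of a constant map is that constant
  have hconst : ∀ c : I × I, v (ContinuousMap.const X c) = c := by
    intro c
    have := hv f (ContinuousMap.const (I × I) c)
    simpa using this
  have h1 : h.comp f = ContinuousMap.const X ((0 : I), (0 : I)) := by
    ext x
    · have : g (f x) = 0 := hg0 (Set.mem_range_self x)
      simpa [hh] using this
    · rfl
  have h2 := hv f h
  rw [h1, hconst] at h2
  have h3 : g (v f) = 1 := hg1 rfl
  have := congrArg (fun p : I × I => (p.1 : ℝ)) h2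
  simp [hh, h3] at this
end

section
/- Let $X$ be an extremally disconnected compact Hausdorff space and let $v : C(X, \mathbf{4}) \to \mathbf{4}$ (where $\mathbf{4} = \{0,1,2,3\}$ is discrete) satisfy $v(h \circ f) = h(v(f))$ for all continuous $f : X \to \mathbf{4}$ and all functions $h : \mathbf{4} \to \mathbf{4}$. Then there exists a point $x_0 \in X$ such that $v(f) = f(x_0)$ for all continuous $f : X \to \mathbf{4}$. -/
/-- If `X` is an extremally disconnected compact Hausdorff space and
`v : C(X, 𝟜) → 𝟜` (with `𝟜 = Fin 4` discrete) satisfies `v(h ∘ f) = h(v f)` for all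
continuous `f : X → 𝟜` and all functions `h : 𝟜 → 𝟜`, then there is a point `x₀ ∈ X` with
`v f = f x₀` for all continuous `f : X → 𝟜`. -/
theorem stmt4 (X : Type*) [TopologicalSpace X] [CompactSpace X] [T2Space X] [Nonempty X]
    (hX : ExtremallyDisconnected X)
    (v : C(X, Fin 4) → Fin 4)
    (hv : ∀ (f : C(X, Fin 4)) (h : Fin 4 → Fin 4),
      v ((ContinuousMap.mk h continuous_of_discreteTopology).comp f) = h (v f)) :
    ∃ x₀ : X, ∀ f : C(X, Fin 4), v f = f x₀ := by
  classical
  set S : C(X, Fin 4) → Set X := fun f => f ⁻¹' {v f} with hSdef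
  have key : ∀ t : Finset C(X, Fin 4), ∃ g : C(X, Fin 4),
      (∀ x, g x = if x ∈ ⋂ f ∈ t, S f then 1 else 0) ∧ v g = 1 := by
    intro t
    induction t using Finset.induction with
    | empty =>
      refine ⟨(ContinuousMap.mk (fun _ => (1 : Fin 4)) continuous_of_discreteTopology).comp
        (ContinuousMap.const X 0), ?_, ?_⟩
      · intro x; simp
      · exact hv (ContinuousMap.const X 0) (fun _ => 1)
    | @insert f s hf ih =>
      obtain ⟨g, hg1, hg2⟩ := ih
      set ha : Fin 4 → Fin 4 := fun n => if n = v f then 1 else 0 with hha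
      set a : C(X, Fin 4) := (ContinuousMap.mk ha continuous_of_discreteTopology).comp f with haa
      have hva : v a = 1 := by
        rw [haa, hv f ha, hha]; simp
      have hk : Continuous fun x => a x + 2 * g x :=
        (continuous_of_discreteTopology
          (α := Fin 4 × Fin 4) (f := fun p => p.1 + 2 * p.2)).comp
          (a.continuous.prodMk g.continuous)
      set k : C(X, Fin 4) := ⟨fun x => a x + 2 * g x, hk⟩ with hkk
      have hax : ∀ x, a x = 0 ∨ a x = 1 := by
        intro x; rw [haa]; simp only [ContinuousMap.comp_apply, ContinuousMap.coe_mk, hha]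
        split <;> simp
      have hgx : ∀ x, g x = 0 ∨ g x = 1 := by
        intro x; rw [hg1]; split <;> simp
      set h1 : Fin 4 → Fin 4 := fun n => if n = 1 ∨ n = 3 then 1 else 0 with hh1
      set h2 : Fin 4 → Fin 4 := fun n => if n = 2 ∨ n = 3 then 1 else 0 with hh2
      set h3 : Fin 4 → Fin 4 := fun n => if n = 3 then 1 else 0 with hh3
      have e1 : a = (ContinuousMap.mk h1 continuous_of_discreteTopology).comp k := by
        ext x
        rcases hax x with h | h <;> rcases hgx x with h' | h' <;>
          simp [hkk, h, h', hh1] <;> decide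
      have e2 : g = (ContinuousMap.mk h2 continuous_of_discreteTopology).comp k := by
        ext x
        rcases hax x with h | h <;> rcases hgx x with h' | h' <;>
          simp [hkk, h, h', hh2] <;> decide
      have hc1 : h1 (v k) = 1 := by rw [← hv k h1, ← e1]; exact hva
      have hc2 : h2 (v k) = 1 := by rw [← hv k h2, ← e2]; exact hg2
      have hc3 : v k = 3 := by
        have : ∀ c : Fin 4, h1 c = 1 → h2 c = 1 → c = 3 := by decide
        exact this _ hc1 hc2
      refine ⟨(ContinuousMap.mk h3 continuous_of_discreteTopology).comp k, ?_, ?_⟩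
      · intro x
        have hmem : (⋂ f' ∈ insert f s, S f') = S f ∩ ⋂ f' ∈ s, S f' :=
          Finset.set_biInter_insert f s S
        rw [hmem]
        have hax' : a x = if f x = v f then 1 else 0 := by
          rw [haa]; simp [hha]
        have hgx' : g x = if x ∈ ⋂ f' ∈ s, S f' then 1 else 0 := hg1 x
        have hSf : (x ∈ S f) = (f x = v f) := by rw [hSdef]; simp [Set.mem_preimage]
        simp only [ContinuousMap.comp_apply, ContinuousMap.coe_mk, hkk, hax', hgx']
        by_cases hq1 : f x = v f <;> by_cases hq2 : x ∈ ⋂ f' ∈ s, S f' <;>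
          simp [hq1, hq2, Set.mem_inter_iff, hSf, hh3] <;> decide
      · rw [hv k h3, hc3, hh3]; decide
  have hcl : ∀ f, IsClosed (S f) := fun f => isClosed_singleton.preimage f.continuous
  have hne : (⋂ f, S f).Nonempty := by
    by_contra hcon
    rw [Set.not_nonempty_iff_eq_empty] at hcon
    obtain ⟨t, ht⟩ := isCompact_univ.elim_finite_subfamily_closed S hcl (by simp [hcon])
    rw [Set.univ_inter] at ht
    obtain ⟨g, hg1, hg2⟩ := key t
    have hg0 : ∀ x, g x = 0 := by
      intro x; rw [hg1, if_neg]; rw [ht]; exact Set.notMem_empty x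
    have : g = (ContinuousMap.mk (fun _ => (0 : Fin 4)) continuous_of_discreteTopology).comp g := by
      ext x; simp [hg0 x]
    have hvg0 : v g = 0 := by rw [this]; exact hv g (fun _ => 0)
    rw [hg2] at hvg0
    exact absurd hvg0 (by decide)
  obtain ⟨x₀, hx₀⟩ := hne
  refine ⟨x₀, fun f => ?_⟩
  have := Set.mem_iInter.mp hx₀ f
  rw [hSdef] at this
  exact (Set.mem_preimage.mp this).symm
end

section
/- Let $X$, $Y$, $Z$ be compact Hausdorff spaces and $f : X \to Y$, $g : X \to Z$ continuous maps such that the pairing $(f,g) : X \to Y \times Z$ is injective with image $R \subseteq Y \times Z$ satisfying the Mal'cev condition: whenever $(y,z) \in R$, $(y',z) \in R$, and $(y,z') \in R$, also $(y',z') \in R$. Then the relation $\mathrm{id}_{Y \sqcup Z} \cup R \cup R^{op} \cup (R \circ R^{op}) \cup (R^{op} \circ R)$ on the disjoint union $Y \sqcup Z$ is an equivalence relation, and it is closed. -/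
open Sum

/-- The relation `id ∪ R ∪ Rᵒᵖ ∪ (R ∘ Rᵒᵖ) ∪ (Rᵒᵖ ∘ R)` on the disjoint union `Y ⊕ Z`,
for a relation `R ⊆ Y × Z`. -/
def malcevRel {Y Z : Type*} (R : Set (Y × Z)) : (Y ⊕ Z) → (Y ⊕ Z) → Prop :=
  fun a b =>
    a = b ∨
    (∃ y z, (y, z) ∈ R ∧ a = inl y ∧ b = inr z) ∨
    (∃ y z, (y, z) ∈ R ∧ a = inr z ∧ b = inl y) ∨
    (∃ y y' z, (y, z) ∈ R ∧ (y', z) ∈ R ∧ a = inl y ∧ b = inl y') ∨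
    (∃ y z z', (y, z) ∈ R ∧ (y, z') ∈ R ∧ a = inr z ∧ b = inr z')

theorem malcev_equiv {Y Z : Type*} (R : Set (Y × Z))
    (hmalcev : ∀ y y' z z', (y, z) ∈ R → (y', z) ∈ R → (y, z') ∈ R → (y', z') ∈ R) :
    Equivalence (malcevRel R) := by
  constructor
  · intro a; exact Or.inl rfl
  · rintro a b (rfl | ⟨y, z, h, rfl, rfl⟩ | ⟨y, z, h, rfl, rfl⟩ |
      ⟨y, y', z, h1, h2, rfl, rfl⟩ | ⟨y, z, z', h1, h2, rfl, rfl⟩)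
    · exact Or.inl rfl
    · exact Or.inr (Or.inr (Or.inl ⟨y, z, h, rfl, rfl⟩))
    · exact Or.inr (Or.inl ⟨y, z, h, rfl, rfl⟩)
    · exact Or.inr (Or.inr (Or.inr (Or.inl ⟨y', y, z, h2, h1, rfl, rfl⟩)))
    · exact Or.inr (Or.inr (Or.inr (Or.inr ⟨y, z', z, h2, h1, rfl, rfl⟩)))
  · rintro a b c
      (rfl | ⟨y, z, h, rfl, rfl⟩ | ⟨y, z, h, rfl, rfl⟩ |
        ⟨y, y', z, h1, h2, rfl, rfl⟩ | ⟨y, z, z', h1, h2, rfl, rfl⟩) hbc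
    · exact hbc
    · rcases hbc with heq | ⟨y₁, z₁, k, hb, rfl⟩ | ⟨y₁, z₁, k, hb, rfl⟩ |
        ⟨y₁, y₂, z₁, k1, k2, hb, rfl⟩ | ⟨y₁, z₁, z₂, k1, k2, hb, rfl⟩
      · exact heq ▸ Or.inr (Or.inl ⟨y, z, h, rfl, rfl⟩)
      · exact absurd hb (by simp)
      · obtain rfl : z = z₁ := inr_injective hb
        exact Or.inr (Or.inr (Or.inr (Or.inl ⟨y, y₁, z, h, k, rfl, rfl⟩)))
      · exact absurd hb (by simp)
      · obtain rfl : z = z₁ := inr_injective hb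
        exact Or.inr (Or.inl ⟨y, z₂, hmalcev y₁ y z z₂ k1 h k2, rfl, rfl⟩)
    · rcases hbc with heq | ⟨y₁, z₁, k, hb, rfl⟩ | ⟨y₁, z₁, k, hb, rfl⟩ |
        ⟨y₁, y₂, z₁, k1, k2, hb, rfl⟩ | ⟨y₁, z₁, z₂, k1, k2, hb, rfl⟩
      · exact heq ▸ Or.inr (Or.inr (Or.inl ⟨y, z, h, rfl, rfl⟩))
      · obtain rfl : y = y₁ := inl_injective hb
        exact Or.inr (Or.inr (Or.inr (Or.inr ⟨y, z, z₁, h, k, rfl, rfl⟩)))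
      · exact absurd hb (by simp)
      · obtain rfl : y = y₁ := inl_injective hb
        exact Or.inr (Or.inr (Or.inl ⟨y₂, z, hmalcev y y₂ z₁ z k1 k2 h, rfl, rfl⟩))
      · exact absurd hb (by simp)
    · rcases hbc with heq | ⟨y₁, z₁, k, hb, rfl⟩ | ⟨y₁, z₁, k, hb, rfl⟩ |
        ⟨y₁, y₂, z₁, k1, k2, hb, rfl⟩ | ⟨y₁, z₁, z₂, k1, k2, hb, rfl⟩
      · exact heq ▸ Or.inr (Or.inr (Or.inr (Or.inl ⟨y, y', z, h1, h2, rfl, rfl⟩)))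
      · obtain rfl : y' = y₁ := inl_injective hb
        exact Or.inr (Or.inl ⟨y, z₁, hmalcev y' y z z₁ h2 h1 k, rfl, rfl⟩)
      · exact absurd hb (by simp)
      · obtain rfl : y' = y₁ := inl_injective hb
        exact Or.inr (Or.inr (Or.inr (Or.inl
          ⟨y, y₂, z, h1, hmalcev y' y₂ z₁ z k1 k2 h2, rfl, rfl⟩)))
      · exact absurd hb (by simp)
    · rcases hbc with heq | ⟨y₁, z₁, k, hb, rfl⟩ | ⟨y₁, z₁, k, hb, rfl⟩ |
        ⟨y₁, y₂, z₁, k1, k2, hb, rfl⟩ | ⟨y₁, z₁, z₂, k1, k2, hb, rfl⟩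
      · exact heq ▸ Or.inr (Or.inr (Or.inr (Or.inr ⟨y, z, z', h1, h2, rfl, rfl⟩)))
      · exact absurd hb (by simp)
      · obtain rfl : z' = z₁ := inr_injective hb
        exact Or.inr (Or.inr (Or.inl ⟨y₁, z, hmalcev y y₁ z' z h2 k h1, rfl, rfl⟩))
      · exact absurd hb (by simp)
      · obtain rfl : z' = z₁ := inr_injective hb
        exact Or.inr (Or.inr (Or.inr (Or.inr
          ⟨y, z, z₂, h1, hmalcev y₁ y z' z₂ k1 h2 k2, rfl, rfl⟩)))

/-- If `f : X → Y`, `g : X → Z` are continuous maps of compact Hausdorff spaces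
whose pairing is injective with image `R` satisfying the Mal'cev condition, then
`id ∪ R ∪ Rᵒᵖ ∪ (R ∘ Rᵒᵖ) ∪ (Rᵒᵖ ∘ R)` is a closed equivalence relation on `Y ⊕ Z`. -/
theorem stmt5 (X Y Z : Type*)
    [TopologicalSpace X] [CompactSpace X] [T2Space X]
    [TopologicalSpace Y] [CompactSpace Y] [T2Space Y]
    [TopologicalSpace Z] [CompactSpace Z] [T2Space Z]
    (f : X → Y) (g : X → Z) (hf : Continuous f) (hg : Continuous g)
    (hinj : Function.Injective (fun x => (f x, g x)))
    (R : Set (Y × Z)) (hR : R = Set.range (fun x => (f x, g x)))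
    (hmalcev : ∀ y y' z z', (y, z) ∈ R → (y', z) ∈ R → (y, z') ∈ R → (y', z') ∈ R) :
    Equivalence (malcevRel R) ∧
      IsClosed {p : (Y ⊕ Z) × (Y ⊕ Z) | malcevRel R p.1 p.2} := by
  refine ⟨malcev_equiv R hmalcev, ?_⟩
  have hRcomp : IsCompact R := by
    rw [hR]; exact isCompact_range (hf.prodMk hg)
  -- the compact "common z" set
  have hK : IsCompact {q : (Y × Z) × (Y × Z) | q.1 ∈ R ∧ q.2 ∈ R ∧ q.1.2 = q.2.2} := by
    have : {q : (Y × Z) × (Y × Z) | q.1 ∈ R ∧ q.2 ∈ R ∧ q.1.2 = q.2.2} =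
        (R ×ˢ R) ∩ {q | q.1.2 = q.2.2} := by
      ext q; simp [Set.mem_prod, and_assoc]
    rw [this]
    exact (hRcomp.prod hRcomp).inter_right
      (isClosed_eq (continuous_snd.comp continuous_fst) (continuous_snd.comp continuous_snd))
  have hK' : IsCompact {q : (Y × Z) × (Y × Z) | q.1 ∈ R ∧ q.2 ∈ R ∧ q.1.1 = q.2.1} := by
    have : {q : (Y × Z) × (Y × Z) | q.1 ∈ R ∧ q.2 ∈ R ∧ q.1.1 = q.2.1} =
        (R ×ˢ R) ∩ {q | q.1.1 = q.2.1} := by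
      ext q; simp [Set.mem_prod, and_assoc]
    rw [this]
    exact (hRcomp.prod hRcomp).inter_right
      (isClosed_eq (continuous_fst.comp continuous_fst) (continuous_fst.comp continuous_snd))
  have hset : {p : (Y ⊕ Z) × (Y ⊕ Z) | malcevRel R p.1 p.2} =
      Set.diagonal (Y ⊕ Z) ∪
      ((fun p : Y × Z => ((inl p.1 : Y ⊕ Z), (inr p.2 : Y ⊕ Z))) '' R) ∪
      ((fun p : Y × Z => ((inr p.2 : Y ⊕ Z), (inl p.1 : Y ⊕ Z))) '' R) ∪
      ((fun q : (Y × Z) × (Y × Z) => ((inl q.1.1 : Y ⊕ Z), (inl q.2.1 : Y ⊕ Z))) ''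
        {q | q.1 ∈ R ∧ q.2 ∈ R ∧ q.1.2 = q.2.2}) ∪
      ((fun q : (Y × Z) × (Y × Z) => ((inr q.1.2 : Y ⊕ Z), (inr q.2.2 : Y ⊕ Z))) ''
        {q | q.1 ∈ R ∧ q.2 ∈ R ∧ q.1.1 = q.2.1}) := by
    ext p
    simp only [Set.mem_setOf_eq, Set.mem_union, Set.mem_image, Set.mem_diagonal_iff, malcevRel]
    constructor
    · rintro (h | ⟨y, z, h, ha, hb⟩ | ⟨y, z, h, ha, hb⟩ |
        ⟨y, y', z, h1, h2, ha, hb⟩ | ⟨y, z, z', h1, h2, ha, hb⟩)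
      · exact Or.inl (Or.inl (Or.inl (Or.inl h)))
      · exact Or.inl (Or.inl (Or.inl (Or.inr ⟨(y, z), h,
          Prod.ext_iff.mpr ⟨ha.symm, hb.symm⟩⟩)))
      · exact Or.inl (Or.inl (Or.inr ⟨(y, z), h, Prod.ext_iff.mpr ⟨ha.symm, hb.symm⟩⟩))
      · exact Or.inl (Or.inr ⟨((y, z), (y', z)), ⟨h1, h2, rfl⟩,
          Prod.ext_iff.mpr ⟨ha.symm, hb.symm⟩⟩)
      · exact Or.inr ⟨((y, z), (y, z')), ⟨h1, h2, rfl⟩,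
          Prod.ext_iff.mpr ⟨ha.symm, hb.symm⟩⟩
    · rintro ((((h | ⟨⟨y, z⟩, h, rfl⟩) | ⟨⟨y, z⟩, h, rfl⟩) |
        ⟨⟨⟨y, z⟩, ⟨y', z'⟩⟩, ⟨h1, h2, hz⟩, rfl⟩) | ⟨⟨⟨y, z⟩, ⟨y', z'⟩⟩, ⟨h1, h2, hy⟩, rfl⟩)
      · exact Or.inl h
      · exact Or.inr (Or.inl ⟨y, z, h, rfl, rfl⟩)
      · exact Or.inr (Or.inr (Or.inl ⟨y, z, h, rfl, rfl⟩))
      · simp only at hz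
        exact Or.inr (Or.inr (Or.inr (Or.inl ⟨y, y', z, h1, hz ▸ h2, rfl, rfl⟩)))
      · simp only at hy
        exact Or.inr (Or.inr (Or.inr (Or.inr ⟨y, z, z', h1, hy ▸ h2, rfl, rfl⟩)))
  rw [hset]
  have cont1 : Continuous (fun p : Y × Z => ((inl p.1 : Y ⊕ Z), (inr p.2 : Y ⊕ Z))) :=
    (continuous_inl.comp continuous_fst).prodMk (continuous_inr.comp continuous_snd)
  have cont2 : Continuous (fun p : Y × Z => ((inr p.2 : Y ⊕ Z), (inl p.1 : Y ⊕ Z))) :=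
    (continuous_inr.comp continuous_snd).prodMk (continuous_inl.comp continuous_fst)
  have cont3 : Continuous
      (fun q : (Y × Z) × (Y × Z) => ((inl q.1.1 : Y ⊕ Z), (inl q.2.1 : Y ⊕ Z))) :=
    (continuous_inl.comp (continuous_fst.comp continuous_fst)).prodMk
      (continuous_inl.comp (continuous_fst.comp continuous_snd))
  have cont4 : Continuous
      (fun q : (Y × Z) × (Y × Z) => ((inr q.1.2 : Y ⊕ Z), (inr q.2.2 : Y ⊕ Z))) :=
    (continuous_inr.comp (continuous_snd.comp continuous_fst)).prodMk
      (continuous_inr.comp (continuous_snd.comp continuous_snd))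
  exact ((((isClosed_diagonal.union (hRcomp.image cont1).isClosed).union
    (hRcomp.image cont2).isClosed).union (hK.image cont3).isClosed).union
    (hK'.image cont4).isClosed)
end

section
/- Let $A$ and $B$ be unital C*-algebras and let $\zeta : \mathbb{C}(A) \to \mathbb{C}(B)$ be a map from the normal elements of $A$ to the normal elements of $B$ which: preserves commuting products and sums (if $\alpha\beta = \beta\alpha$ then $\zeta(\alpha\beta) = \zeta(\alpha)\zeta(\beta)$ and $\zeta(\alpha+\beta) = \zeta(\alpha)+\zeta(\beta)$), is $\mathbb{C}$-homogeneous, involutive, unital, additive on all pairs of self-adjoint elements, and multiplicative on all pairs of unitary elements. Then $\zeta$ extends to a unital $*$-homomorphism $\hat{\zeta} : A \to B$, given by $\hat{\zeta}(a + ib) = \zeta(a) + i\zeta(b)$ for self-adjoint $a, b$. -/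
/-!
Every `x : A` is `ℜ x + I • ℑ x` with `ℜ x`, `ℑ x` self-adjoint, and `ζ` is `ℝ`-linear
on the self-adjoint part, so `x ↦ ζ (ℜ x) + I • ζ (ℑ x)` is a `ℂ`-linear, `*`-preserving map
agreeing with `ζ` on normal elements (whose real and imaginary parts commute). It is
multiplicative on unitaries, and a unital C⋆-algebra is spanned by its unitaries (each
self-adjoint contraction being `(u + u⋆) / 2` for a unitary `u`), so by bilinearity it is
multiplicative everywhere.
-/

open ComplexStarModule Complex

section Complexify

variable {A B : Type*} [AddCommGroup A] [Module ℂ A] [StarAddMonoid A] [StarModule ℂ A]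
  [AddCommGroup B] [Module ℂ B]

noncomputable def LinearMap.complexifyOfSelfAdjoint (L : selfAdjoint A →ₗ[ℝ] B) :
    A →ₗ[ℂ] B where
  toFun x := L (ℜ x) + I • L (ℑ x)
  map_add' x y := by
    simp only [map_add, smul_add]
    abel
  map_smul' c x := by
    conv_rhs => rw [← re_add_im c]
    simp only [realPart_smul, imaginaryPart_smul, map_sub, map_add, map_smul, RingHom.id_apply,
      ← Complex.coe_smul]
    linear_combination (norm := module) I_mul_I • (-(c.im : ℂ) • L (ℑ x))

variable (L : selfAdjoint A →ₗ[ℝ] B)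

lemma LinearMap.complexifyOfSelfAdjoint_apply (x : A) :
    L.complexifyOfSelfAdjoint x = L (ℜ x) + I • L (ℑ x) :=
  rfl

lemma LinearMap.complexifyOfSelfAdjoint_star [StarAddMonoid B] [StarModule ℂ B]
    (hL : ∀ a, IsSelfAdjoint (L a)) (x : A) :
    L.complexifyOfSelfAdjoint (star x) = star (L.complexifyOfSelfAdjoint x) := by
  have h_re : ℜ (star x) = ℜ x := by
    ext
    simp only [realPart_apply_coe, star_star, add_comm]
  have h_im : ℑ (star x) = -ℑ x := by
    ext
    simp only [imaginaryPart_apply_coe, star_star, NegMemClass.coe_neg]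
    module
  simp only [complexifyOfSelfAdjoint_apply, h_re, h_im, map_neg, star_add, star_smul,
    (hL _).star_eq, star_def, conj_I, smul_neg, neg_smul]

end Complexify

lemma LinearMap.map_mul_of_map_mul_unitary {A B : Type*} [CStarAlgebra A] [Ring B]
    [Algebra ℂ B] (φ : A →ₗ[ℂ] B)
    (h : ∀ u ∈ unitary A, ∀ v ∈ unitary A, φ (u * v) = φ u * φ v) (x y : A) :
    φ (x * y) = φ x * φ y := by
  have key : (LinearMap.mul ℂ A).compr₂ φ = (LinearMap.mul ℂ B).compl₁₂ φ φ :=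
    LinearMap.ext_on (CStarAlgebra.span_unitary A) fun u hu ↦
      LinearMap.ext_on (CStarAlgebra.span_unitary A) fun v hv ↦ h u hu v hv
  exact LinearMap.congr_fun₂ key x y

lemma map_eq_realPart_add_I_smul_imaginaryPart_of_isStarNormal {A B : Type*} [NonUnitalRing A]
    [StarRing A] [Module ℂ A] [IsScalarTower ℂ A A] [SMulCommClass ℂ A A] [StarModule ℂ A]
    [AddCommGroup B] [Module ℂ B] {ζ : A → B}
    (hadd : ∀ a b : A, IsStarNormal a → IsStarNormal b → Commute a b →
      ζ (a + b) = ζ a + ζ b)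
    (hsmul : ∀ (c : ℂ) (a : A), IsStarNormal a → ζ (c • a) = c • ζ a)
    {a : A} (ha : IsStarNormal a) :
    ζ a = ζ (ℜ a) + I • ζ (ℑ a) := by
  have h_im : IsStarNormal (I • (ℑ a : A)) :=
    inferInstanceAs (IsStarNormal ((⟨_, by simp⟩ : skewAdjoint A) : A))
  conv_lhs => rw [← realPart_add_I_smul_imaginaryPart a]
  rw [hadd _ _ (ℜ a).2.isStarNormal h_im ((Commute.realPart_imaginaryPart a).smul_right I),
    hsmul _ _ (ℑ a).2.isStarNormal]

theorem stmt7_general (A B : Type*)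
    [NormedRing A] [StarRing A] [CStarRing A] [NormedAlgebra ℂ A] [StarModule ℂ A]
    [CompleteSpace A]
    [NormedRing B] [StarRing B] [NormedAlgebra ℂ B] [StarModule ℂ B]
    (ζ : A → B)
    (hadd : ∀ a b : A, IsStarNormal a → IsStarNormal b → Commute a b →
      ζ (a + b) = ζ a + ζ b)
    (hsmul : ∀ (c : ℂ) (a : A), IsStarNormal a → ζ (c • a) = c • ζ a)
    (hstar : ∀ a : A, IsStarNormal a → ζ (star a) = star (ζ a))
    (hone : ζ 1 = 1)
    (hsa : ∀ a b : A, IsSelfAdjoint a → IsSelfAdjoint b → ζ (a + b) = ζ a + ζ b)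
    (huni : ∀ u v : A, u ∈ unitary A → v ∈ unitary A → ζ (u * v) = ζ u * ζ v) :
    ∃ φ : A →⋆ₐ[ℂ] B,
      (∀ a : A, IsStarNormal a → φ a = ζ a) ∧
      (∀ a b : A, IsSelfAdjoint a → IsSelfAdjoint b →
        φ (a + Complex.I • b) = ζ a + Complex.I • ζ b) := by
  let _ : CStarAlgebra A := ⟨⟩
  let L : selfAdjoint A →ₗ[ℝ] B :=
    { toFun a := ζ a
      map_add' a b := hsa a b a.2 b.2
      map_smul' r a := by
        simpa only [selfAdjoint.val_smul, RingHom.id_apply, Complex.coe_smul]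
          using hsmul r a a.2.isStarNormal }
  have hL_sa (a : selfAdjoint A) : IsSelfAdjoint (L a) := by
    change star (ζ a) = ζ a
    rw [← hstar a a.2.isStarNormal, a.2.star_eq]
  set φ := L.complexifyOfSelfAdjoint
  have hφ_normal (a : A) (ha : IsStarNormal a) : φ a = ζ a :=
    (map_eq_realPart_add_I_smul_imaginaryPart_of_isStarNormal hadd hsmul ha).symm
  have hφ_unitary : ∀ u ∈ unitary A, ∀ v ∈ unitary A, φ (u * v) = φ u * φ v := by
    intro u hu v hv
    simp only [hφ_normal _ (isStarNormal_of_mem_unitary _), huni u v hu hv, hu, hv,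
      mul_mem hu hv]
  have hφ_one : φ 1 = 1 := by rw [hφ_normal 1 inferInstance, hone]
  refine ⟨{ AlgHom.ofLinearMap φ hφ_one (φ.map_mul_of_map_mul_unitary hφ_unitary) with
    map_star' := L.complexifyOfSelfAdjoint_star hL_sa }, hφ_normal, fun a b ha hb ↦ ?_⟩
  change φ (a + I • b) = _
  rw [map_add, map_smul, hφ_normal a ha.isStarNormal, hφ_normal b hb.isStarNormal]

/-- A piecewise `*`-homomorphism `ζ` from the normal part of `A` to the normal
part of `B` (preserving commuting products and sums, `ℂ`-homogeneous, involutive, unital)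
which is additive on all pairs of self-adjoints and multiplicative on all pairs of unitaries
extends to a unital `*`-homomorphism `A → B`, given by `a + ib ↦ ζ a + i ζ b` on
self-adjoint `a, b`. -/
theorem stmt7 (A B : Type*)
    [NormedRing A] [StarRing A] [CStarRing A] [NormedAlgebra ℂ A] [StarModule ℂ A]
    [CompleteSpace A]
    [NormedRing B] [StarRing B] [CStarRing B] [NormedAlgebra ℂ B] [StarModule ℂ B]
    [CompleteSpace B]
    (ζ : A → B)
    (hnormal : ∀ a : A, IsStarNormal a → IsStarNormal (ζ a))
    (hmul : ∀ a b : A, IsStarNormal a → IsStarNormal b → Commute a b →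
      ζ (a * b) = ζ a * ζ b)
    (hadd : ∀ a b : A, IsStarNormal a → IsStarNormal b → Commute a b →
      ζ (a + b) = ζ a + ζ b)
    (hsmul : ∀ (c : ℂ) (a : A), IsStarNormal a → ζ (c • a) = c • ζ a)
    (hstar : ∀ a : A, IsStarNormal a → ζ (star a) = star (ζ a))
    (hone : ζ 1 = 1)
    (hsa : ∀ a b : A, IsSelfAdjoint a → IsSelfAdjoint b → ζ (a + b) = ζ a + ζ b)
    (huni : ∀ u v : A, u ∈ unitary A → v ∈ unitary A → ζ (u * v) = ζ u * ζ v) :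
    ∃ φ : A →⋆ₐ[ℂ] B,
      (∀ a : A, IsStarNormal a → φ a = ζ a) ∧
      (∀ a b : A, IsSelfAdjoint a → IsSelfAdjoint b →
        φ (a + Complex.I • b) = ζ a + Complex.I • ζ b) :=
  stmt7_general A B ζ hadd hsmul hstar hone hsa huni
end

section
/- Let $A$, $B$ be unital C*-algebras and $\zeta : \mathbb{C}(A) \to \mathbb{C}(B)$ a piecewise $*$-homomorphism (preserving commuting sums and products, scalar multiplication, involution, and unit) which is multiplicative on all pairs of unitaries. Then $\zeta$ is additive on all pairs of self-adjoint elements, i.e. $\zeta(\alpha + \beta) = \zeta(\alpha) + \zeta(\beta)$ for all self-adjoint $\alpha, \beta \in A$. Consequently $\zeta$ extends to a unital $*$-homomorphism $A \to B$. -/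
/-!
On the C⋆-algebra generated by one normal element `a`, `ζ` is a `⋆`-homomorphism (it is
`ζ ∘ cfcHom`); hence `ζ` is contractive on normal elements and commutes with the exponential.
For self-adjoint `α, β` the unitaries `u t = e^{it(α+β)} e^{-itα} e^{-itβ}` satisfy
`u t - 1 = o(t)`. Since `ζ` is multiplicative on unitaries,
`ζ (u t) = e^{itζ(α+β)} e^{-itζ(α)} e^{-itζ(β)}`, whose derivative at `0` is
`i (ζ(α+β) - ζ α - ζ β)`; and `‖ζ (u t) - 1‖ = ‖ζ (u t - 1)‖ ≤ ‖u t - 1‖`, so this derivative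
vanishes. Additivity on self-adjoint elements makes `x ↦ ζ (ℜ x) + i ζ (ℑ x)` complex linear; it
is multiplicative on unitaries, hence everywhere because unitaries span a C⋆-algebra.
-/

open NormedSpace Complex Filter
open scoped ComplexStarModule

theorem HasDerivAt.eq_zero_of_norm_sub_le {𝕜 E F : Type*} [NontriviallyNormedField 𝕜]
    [NormedAddCommGroup E] [NormedSpace 𝕜 E] [NormedAddCommGroup F] [NormedSpace 𝕜 F]
    {f : 𝕜 → E} {g : 𝕜 → F} {g' : F} {x : 𝕜} (hf : HasDerivAt f 0 x) (hg : HasDerivAt g g' x)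
    (hle : ∀ t, ‖g t - g x‖ ≤ ‖f t - f x‖) : g' = 0 := by
  rw [hasDerivAt_iff_isLittleO] at hf
  have hg0 : HasDerivAt g 0 x := by
    rw [hasDerivAt_iff_isLittleO]
    simp only [smul_zero, sub_zero] at hf ⊢
    exact (Asymptotics.IsBigO.of_bound 1 (by simpa using Eventually.of_forall hle)).trans_isLittleO hf
  exact hg.unique hg0

theorem hasDerivAt_exp_smul_mul_exp_smul_mul_exp_smul {𝕂 𝔸 : Type*} [RCLike 𝕂] [NormedRing 𝔸]
    [NormedAlgebra 𝕂 𝔸] [CompleteSpace 𝔸] (x y z : 𝔸) :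
    HasDerivAt (fun t : 𝕂 ↦ exp (t • x) * exp (t • y) * exp (t • z)) (x + y + z) 0 :=
  (((hasDerivAt_exp_smul_const x (0 : 𝕂)).mul (hasDerivAt_exp_smul_const y 0)).mul
    (hasDerivAt_exp_smul_const z 0)).congr_deriv (by simp)

theorem exp_real_smul_I_smul_mem_unitary {A : Type*} [NormedRing A] [NormedAlgebra ℂ A]
    [StarRing A] [ContinuousStar A] [CompleteSpace A] [StarModule ℂ A] (t : ℝ) {a : A}
    (ha : IsSelfAdjoint a) : exp (t • (I • a)) ∈ unitary A := by
  simpa [smul_comm t I a] using (selfAdjoint.expUnitary ⟨t • a, (IsSelfAdjoint.all t).smul ha⟩).2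

section ComplexStarModule

variable {E F : Type*} [AddCommGroup E] [Module ℂ E] [StarAddMonoid E] [StarModule ℂ E]
  [AddCommGroup F] [Module ℂ F]

theorem exists_linearMap_eq_of_isSelfAdjoint (f : E → F)
    (hadd : ∀ a b, IsSelfAdjoint a → IsSelfAdjoint b → f (a + b) = f a + f b)
    (hsmul : ∀ (r : ℝ) a, IsSelfAdjoint a → f (r • a) = r • f a) :
    ∃ φ : E →ₗ[ℂ] F, ∀ a, IsSelfAdjoint a → φ a = f a := by
  let ψ : selfAdjoint E →ₗ[ℝ] F :=
    { toFun a := f a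
      map_add' a b := hadd a b a.2 b.2
      map_smul' r a := hsmul r a a.2 }
  refine ⟨{ toFun x := ψ (ℜ x) + I • ψ (ℑ x)
            map_add' x y := by simp only [map_add, smul_add]; abel
            map_smul' c x := ?_ }, fun a ha ↦ ?_⟩
  · simp only [realPart_smul, imaginaryPart_smul, map_sub, map_add, map_smul, RingHom.id_apply]
    conv_rhs => rw [← c.re_add_im]
    simp only [← Complex.coe_smul, add_smul, mul_smul, smul_add]
    rw [smul_smul I I, I_mul_I]
    module
  · change ψ (ℜ a) + I • ψ (ℑ a) = f a
    rw [ha.imaginaryPart, map_zero, smul_zero, add_zero]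
    exact congrArg f ha.coe_realPart

theorem LinearMap.map_star_of_isSelfAdjoint [StarAddMonoid F] [StarModule ℂ F] (φ : E →ₗ[ℂ] F)
    (h : ∀ a, IsSelfAdjoint a → IsSelfAdjoint (φ a)) (x : E) : φ (star x) = star (φ x) := by
  conv_lhs => rw [← realPart_add_I_smul_imaginaryPart x]
  conv_rhs => rw [← realPart_add_I_smul_imaginaryPart x]
  simp [(h _ (ℜ x).2).star_eq, (h _ (ℑ x).2).star_eq]

end ComplexStarModule

theorem LinearMap.map_mul_of_span_eq_top {R A B : Type*} [CommSemiring R] [Semiring A]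
    [Algebra R A] [Semiring B] [Algebra R B] (φ : A →ₗ[R] B) {s : Set A}
    (hs : Submodule.span R s = ⊤) (h : ∀ x ∈ s, ∀ y ∈ s, φ (x * y) = φ x * φ y) (x y : A) :
    φ (x * y) = φ x * φ y := by
  have hright (y : A) (hy : y ∈ s) :
      φ ∘ₗ LinearMap.mulRight R y = LinearMap.mulRight R (φ y) ∘ₗ φ :=
    LinearMap.ext_on hs fun x hx ↦ h x hx y hy
  have hleft : φ ∘ₗ LinearMap.mulLeft R x = LinearMap.mulLeft R (φ x) ∘ₗ φ :=
    LinearMap.ext_on hs fun y hy ↦ LinearMap.congr_fun (hright y hy) x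
  exact LinearMap.congr_fun hleft y

structure IsPiecewiseStarHom {A B : Type*} [Ring A] [StarRing A] [Algebra ℂ A]
    [Ring B] [StarRing B] [Algebra ℂ B] (ζ : A → B) : Prop where
  map_mul (a b : A) [IsStarNormal a] [IsStarNormal b] : Commute a b → ζ (a * b) = ζ a * ζ b
  map_add (a b : A) [IsStarNormal a] [IsStarNormal b] : Commute a b → ζ (a + b) = ζ a + ζ b
  map_smul (c : ℂ) (a : A) [IsStarNormal a] : ζ (c • a) = c • ζ a
  map_star (a : A) [IsStarNormal a] : ζ (star a) = star (ζ a)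
  map_one : ζ 1 = 1

namespace IsPiecewiseStarHom

section Algebraic

variable {A B : Type*} [Ring A] [StarRing A] [Algebra ℂ A]
  [Ring B] [StarRing B] [Algebra ℂ B] {ζ : A → B} (hζ : IsPiecewiseStarHom ζ)
include hζ

lemma map_zero : ζ 0 = 0 := by
  simpa using hζ.map_smul 0 0

lemma map_neg (a : A) [IsStarNormal a] : ζ (-a) = -ζ a := by
  simpa using hζ.map_smul (-1) a

lemma map_real_smul (r : ℝ) (a : A) [IsStarNormal a] : ζ (r • a) = r • ζ a := by
  simpa only [Complex.coe_smul] using hζ.map_smul r a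

lemma map_sub_one (a : A) [IsStarNormal a] : ζ (a - 1) = ζ a - 1 := by
  rw [sub_eq_add_neg, hζ.map_add a (-1) (Commute.one_right a).neg_right, hζ.map_neg, hζ.map_one,
    sub_eq_add_neg]

lemma isSelfAdjoint_map {a : A} (ha : IsSelfAdjoint a) : IsSelfAdjoint (ζ a) := by
  have := ha.isStarNormal
  rw [IsSelfAdjoint, ← hζ.map_star, ha.star_eq]

def compStarAlgHom {C : Type*} [CommRing C] [StarRing C] [Algebra ℂ C] (ψ : C →⋆ₐ[ℂ] A) :
    C →⋆ₐ[ℂ] B where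
  toFun f := ζ (ψ f)
  map_one' := by rw [_root_.map_one, hζ.map_one]
  map_mul' f g := by rw [_root_.map_mul, hζ.map_mul _ _ ((Commute.all f g).map ψ)]
  map_zero' := by rw [_root_.map_zero, hζ.map_zero]
  map_add' f g := by rw [_root_.map_add, hζ.map_add _ _ ((Commute.all f g).map ψ)]
  commutes' c := by
    rw [AlgHomClass.commutes, Algebra.algebraMap_eq_smul_one, hζ.map_smul, hζ.map_one,
      Algebra.algebraMap_eq_smul_one]
  map_star' f := by rw [StarHomClass.map_star, hζ.map_star]

@[simp]
lemma compStarAlgHom_apply {C : Type*} [CommRing C] [StarRing C] [Algebra ℂ C]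
    (ψ : C →⋆ₐ[ℂ] A) (f : C) : hζ.compStarAlgHom ψ f = ζ (ψ f) :=
  rfl

end Algebraic

section CStarAlgebra

open scoped CStarAlgebra

variable {A B : Type*} [CStarAlgebra A] [CStarAlgebra B] {ζ : A → B} (hζ : IsPiecewiseStarHom ζ)
include hζ

lemma norm_map_le (a : A) [ha : IsStarNormal a] : ‖ζ a‖ ≤ ‖a‖ := by
  set ι := (ContinuousMap.id ℂ).restrict (spectrum ℂ a)
  have hι : cfcHom ha ι = a := cfcHom_id ha
  calc ‖ζ a‖ = ‖hζ.compStarAlgHom (cfcHom ha) ι‖ := by rw [compStarAlgHom_apply, hι]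
    _ ≤ ‖ι‖ := NonUnitalStarAlgHom.norm_apply_le _ _
    _ = ‖a‖ := by rw [← norm_cfcHom (𝕜 := ℂ) a, hι]

lemma norm_map_sub_one_le (a : A) [IsStarNormal a] : ‖ζ a - 1‖ ≤ ‖a - 1‖ := by
  have : IsStarNormal (a - 1) := Commute.isStarNormal_sub (by simp)
  rw [← hζ.map_sub_one]
  exact hζ.norm_map_le _

lemma map_exp_smul (c : ℂ) (a : A) [ha : IsStarNormal a] : ζ (exp (c • a)) = exp (c • ζ a) := by
  let : NormedAlgebra ℚ A := .restrictScalars ℚ ℂ A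
  let : NormedAlgebra ℚ B := .restrictScalars ℚ ℂ B
  set ι := (ContinuousMap.id ℂ).restrict (spectrum ℂ a)
  have hι : cfcHom ha ι = a := cfcHom_id ha
  calc ζ (exp (c • a)) = hζ.compStarAlgHom (cfcHom ha) (exp (c • ι)) := by
        rw [compStarAlgHom_apply, map_exp _ (cfcHom_continuous ha), _root_.map_smul, hι]
    _ = exp (c • ζ a) := by
        rw [map_exp _ (map_continuous _), _root_.map_smul, compStarAlgHom_apply, hι]

lemma map_exp_real_smul_I_smul (t : ℝ) {a : A} (ha : IsSelfAdjoint a) :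
    ζ (exp (t • (I • a))) = exp (t • (I • ζ a)) := by
  have := ha.isStarNormal
  simp only [← Complex.coe_smul, smul_smul, hζ.map_exp_smul]

theorem map_add_add_eq_zero_of_isSelfAdjoint
    (huni : ∀ u v : A, u ∈ unitary A → v ∈ unitary A → ζ (u * v) = ζ u * ζ v)
    {x y z : A} (hx : IsSelfAdjoint x) (hy : IsSelfAdjoint y) (hz : IsSelfAdjoint z)
    (hxyz : x + y + z = 0) : ζ x + ζ y + ζ z = 0 := by
  set u : ℝ → A := fun t ↦ exp (t • (I • x)) * exp (t • (I • y)) * exp (t • (I • z))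
  set g : ℝ → B := fun t ↦ exp (t • (I • ζ x)) * exp (t • (I • ζ y)) * exp (t • (I • ζ z))
  have hu : HasDerivAt u 0 0 := by
    simpa only [← smul_add, hxyz, smul_zero] using
      hasDerivAt_exp_smul_mul_exp_smul_mul_exp_smul (I • x) (I • y) (I • z)
  have hg : HasDerivAt g (I • (ζ x + ζ y + ζ z)) 0 := by
    simpa only [← smul_add] using
      hasDerivAt_exp_smul_mul_exp_smul_mul_exp_smul (I • ζ x) (I • ζ y) (I • ζ z)
  have hmem (t : ℝ) {w : A} (hw : IsSelfAdjoint w) : exp (t • (I • w)) ∈ unitary A :=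
    exp_real_smul_I_smul_mem_unitary t hw
  have hgu (t : ℝ) : g t = ζ (u t) := by
    simp only [u, g, huni _ _ (mul_mem (hmem t hx) (hmem t hy)) (hmem t hz),
      huni _ _ (hmem t hx) (hmem t hy), hζ.map_exp_real_smul_I_smul t hx,
      hζ.map_exp_real_smul_I_smul t hy, hζ.map_exp_real_smul_I_smul t hz]
  have hle (t : ℝ) : ‖g t - g 0‖ ≤ ‖u t - u 0‖ := by
    have : IsStarNormal (u t) :=
      isStarNormal_of_mem_unitary (mul_mem (mul_mem (hmem t hx) (hmem t hy)) (hmem t hz))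
    simpa [u, g, hgu, hζ.map_one] using hζ.norm_map_sub_one_le (u t)
  exact (smul_eq_zero.mp (hu.eq_zero_of_norm_sub_le hg hle)).resolve_left I_ne_zero

theorem map_add_of_isSelfAdjoint
    (huni : ∀ u v : A, u ∈ unitary A → v ∈ unitary A → ζ (u * v) = ζ u * ζ v)
    {a b : A} (ha : IsSelfAdjoint a) (hb : IsSelfAdjoint b) : ζ (a + b) = ζ a + ζ b := by
  have := ha.isStarNormal
  have := hb.isStarNormal
  have h := hζ.map_add_add_eq_zero_of_isSelfAdjoint huni (ha.add hb) ha.neg hb.neg (by abel)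
  rw [hζ.map_neg, hζ.map_neg] at h
  exact eq_of_sub_eq_zero (by rw [← h]; abel)

theorem exists_starAlgHom_eq
    (hsa : ∀ a b : A, IsSelfAdjoint a → IsSelfAdjoint b → ζ (a + b) = ζ a + ζ b)
    (huni : ∀ u v : A, u ∈ unitary A → v ∈ unitary A → ζ (u * v) = ζ u * ζ v) :
    ∃ φ : A →⋆ₐ[ℂ] B, ∀ a : A, IsStarNormal a → φ a = ζ a := by
  obtain ⟨φ, hφ⟩ := exists_linearMap_eq_of_isSelfAdjoint ζ hsa fun r a ha ↦
    have := ha.isStarNormal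
    hζ.map_real_smul r a
  have hφζ (a : A) [IsStarNormal a] : φ a = ζ a := by
    rw [← realPart_add_I_smul_imaginaryPart a,
      hζ.map_add _ _ ((Commute.realPart_imaginaryPart a).smul_right I), hζ.map_smul, φ.map_add,
      φ.map_smul, hφ _ (ℜ a).2, hφ _ (ℑ a).2]
  have hφmul := φ.map_mul_of_span_eq_top (CStarAlgebra.span_unitary A) fun u hu v hv ↦ by
    have := isStarNormal_of_mem_unitary hu
    have := isStarNormal_of_mem_unitary hv
    have := isStarNormal_of_mem_unitary (mul_mem hu hv)
    rw [hφζ, hφζ, hφζ, huni u v hu hv]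
  refine ⟨{ AlgHom.ofLinearMap φ (by rw [hφζ, hζ.map_one]) hφmul with
    map_star' := φ.map_star_of_isSelfAdjoint fun a ha ↦ hφ a ha ▸ hζ.isSelfAdjoint_map ha },
    fun a _ ↦ hφζ a⟩

end CStarAlgebra

end IsPiecewiseStarHom

theorem stmt9_general (A B : Type*)
    [NormedRing A] [StarRing A] [CStarRing A] [NormedAlgebra ℂ A] [StarModule ℂ A]
    [CompleteSpace A]
    [NormedRing B] [StarRing B] [CStarRing B] [NormedAlgebra ℂ B] [StarModule ℂ B]
    [CompleteSpace B]
    (ζ : A → B)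
    (hmul : ∀ a b : A, IsStarNormal a → IsStarNormal b → Commute a b →
      ζ (a * b) = ζ a * ζ b)
    (hadd : ∀ a b : A, IsStarNormal a → IsStarNormal b → Commute a b →
      ζ (a + b) = ζ a + ζ b)
    (hsmul : ∀ (c : ℂ) (a : A), IsStarNormal a → ζ (c • a) = c • ζ a)
    (hstar : ∀ a : A, IsStarNormal a → ζ (star a) = star (ζ a))
    (hone : ζ 1 = 1)
    (huni : ∀ u v : A, u ∈ unitary A → v ∈ unitary A → ζ (u * v) = ζ u * ζ v) :
    (∀ a b : A, IsSelfAdjoint a → IsSelfAdjoint b → ζ (a + b) = ζ a + ζ b) ∧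
    ∃ φ : A →⋆ₐ[ℂ] B, ∀ a : A, IsStarNormal a → φ a = ζ a := by
  let : CStarAlgebra A := {}
  let : CStarAlgebra B := {}
  have hζ : IsPiecewiseStarHom ζ :=
    ⟨fun a b _ _ ↦ hmul a b ‹_› ‹_›, fun a b _ _ ↦ hadd a b ‹_› ‹_›, fun c a _ ↦ hsmul c a ‹_›,
      fun a _ ↦ hstar a ‹_›, hone⟩
  have hsa (a b : A) (ha : IsSelfAdjoint a) (hb : IsSelfAdjoint b) : ζ (a + b) = ζ a + ζ b :=
    hζ.map_add_of_isSelfAdjoint huni ha hb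
  exact ⟨hsa, hζ.exists_starAlgHom_eq hsa huni⟩

/-- A piecewise `*`-homomorphism `ζ : ℂ(A) → ℂ(B)` between the normal parts of
unital C*-algebras (preserving commuting sums and products, scalar multiplication,
involution and unit) which is multiplicative on all pairs of unitaries is additive on all
pairs of self-adjoint elements, and consequently extends to a unital `*`-homomorphism
`A → B`. -/
theorem stmt9 (A B : Type*)
    [NormedRing A] [StarRing A] [CStarRing A] [NormedAlgebra ℂ A] [StarModule ℂ A]
    [CompleteSpace A]
    [NormedRing B] [StarRing B] [CStarRing B] [NormedAlgebra ℂ B] [StarModule ℂ B]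
    [CompleteSpace B]
    (ζ : A → B)
    (hnormal : ∀ a : A, IsStarNormal a → IsStarNormal (ζ a))
    (hmul : ∀ a b : A, IsStarNormal a → IsStarNormal b → Commute a b →
      ζ (a * b) = ζ a * ζ b)
    (hadd : ∀ a b : A, IsStarNormal a → IsStarNormal b → Commute a b →
      ζ (a + b) = ζ a + ζ b)
    (hsmul : ∀ (c : ℂ) (a : A), IsStarNormal a → ζ (c • a) = c • ζ a)
    (hstar : ∀ a : A, IsStarNormal a → ζ (star a) = star (ζ a))
    (hone : ζ 1 = 1)
    (huni : ∀ u v : A, u ∈ unitary A → v ∈ unitary A → ζ (u * v) = ζ u * ζ v) :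
    (∀ a b : A, IsSelfAdjoint a → IsSelfAdjoint b → ζ (a + b) = ζ a + ζ b) ∧
    ∃ φ : A →⋆ₐ[ℂ] B, ∀ a : A, IsStarNormal a → φ a = ζ a :=
  stmt9_general A B ζ hmul hadd hsmul hstar hone huni
end

section
/- There is no piecewise $*$-homomorphism from $M_n(\mathbb{C})$ to $\mathbb{C}$ for $n \geq 3$, i.e. there is no map $\zeta : \mathbb{C}(M_n) \to \mathbb{C}$ from the normal $n \times n$ matrices to $\mathbb{C}$ that is unital, involutive, $\mathbb{C}$-homogeneous, and additive and multiplicative on all pairs of commuting normal matrices. -/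
/-!
A map `ζ` that is additive and multiplicative on commuting normal matrices sends projections to
`0` or `1` and is additive on commuting families of projections. As the diagonal matrix units sum
to `1`, one of them, `Eₖₖ`, has value `1`; compressing to a `3 × 3` corner through `k` yields such
a map on `M₃` that is still unital. There the rank-one projections onto any orthogonal basis of
`ℤ³` sum to `1`, so `v ↦ ζ(P_v)` would be a Kochen–Specker colouring of `ℤ³`: a map to `{0, 1}`
taking the value `1` exactly once on every orthogonal basis. A configuration of 36 orthogonal
bases already admits no such colouring.
-/

open Matrix
open scoped ComplexOrder

/-- The ring-homomorphism part of a piecewise `*`-homomorphism, without unitality. -/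
def IsPiecewiseNonUnitalRingHom {A R : Type*} [Ring A] [Star A] [Ring R] (ζ : A → R) : Prop :=
  ∀ a b : A, IsStarNormal a → IsStarNormal b → Commute a b →
    ζ (a + b) = ζ a + ζ b ∧ ζ (a * b) = ζ a * ζ b

namespace IsPiecewiseNonUnitalRingHom

variable {A B R : Type*} [Ring A] [StarRing A] [Ring B] [StarRing B] [Ring R]
  {ζ : A → R} (hζ : IsPiecewiseNonUnitalRingHom ζ)
include hζ

theorem map_zero : ζ 0 = 0 := by
  simpa using (hζ 0 0 .zero .zero (.zero_left 0)).1

theorem map_sum {ι : Type*} (s : Finset ι) (a : ι → A) (hsa : ∀ i ∈ s, IsSelfAdjoint (a i))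
    (hcomm : (s : Set ι).Pairwise fun i j => Commute (a i) (a j)) :
    ζ (∑ i ∈ s, a i) = ∑ i ∈ s, ζ (a i) := by
  classical
  induction s using Finset.induction_on with
  | empty => simpa using hζ.map_zero
  | insert i s hi ih =>
    rw [Finset.coe_insert, Set.pairwise_insert] at hcomm
    have hsa' : ∀ j ∈ s, IsSelfAdjoint (a j) := fun j hj => hsa j (Finset.mem_insert_of_mem hj)
    have hi_comm : Commute (a i) (∑ j ∈ s, a j) := Commute.sum_right _ _ _ fun j hj =>
      (hcomm.2 j hj (ne_of_mem_of_not_mem hj hi).symm).1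
    rw [Finset.sum_insert hi, Finset.sum_insert hi,
      (hζ _ _ (hsa i (Finset.mem_insert_self i s)).isStarNormal
        (isSelfAdjoint_sum s hsa').isStarNormal hi_comm).1, ih hsa' hcomm.1]

theorem map_eq_zero_or_one [NoZeroDivisors R] {p : A} (hp : IsStarProjection p) :
    ζ p = 0 ∨ ζ p = 1 := by
  have := (hζ p p hp.isStarNormal hp.isStarNormal (.refl p)).2
  rw [hp.isIdempotentElem.eq] at this
  exact IsIdempotentElem.iff_eq_zero_or_one.mp this.symm

theorem eq_one_of_mul_eq {p q : A} (hp : IsStarProjection p) (hq : IsStarProjection q)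
    (hpq : p * q = q) (hq1 : ζ q = 1) : ζ p = 1 := by
  have hqp : q * p = q := by
    simpa [hp.isSelfAdjoint.star_eq, hq.isSelfAdjoint.star_eq] using congrArg star hpq
  have := (hζ p q hp.isStarNormal hq.isStarNormal (hpq.trans hqp.symm)).2
  rwa [hpq, hq1, mul_one, eq_comm] at this

omit hζ in
theorem comp {ζ : B → R} (hζ : IsPiecewiseNonUnitalRingHom ζ) (φ : A →⋆ₙ+* B) :
    IsPiecewiseNonUnitalRingHom (ζ ∘ φ) := by
  intro a b ha hb hab
  simpa only [Function.comp_apply, map_add, map_mul] using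
    hζ (φ a) (φ b) (ha.map φ) (hb.map φ) (hab.map φ)

end IsPiecewiseNonUnitalRingHom

namespace Matrix

section RankOneProj

variable {n 𝕜 : Type*} [Fintype n] [RCLike 𝕜]

noncomputable def rankOneProj (x : n → 𝕜) : Matrix n n 𝕜 :=
  (star x ⬝ᵥ x)⁻¹ • vecMulVec x (star x)

theorem rankOneProj_mul_rankOneProj (x y : n → 𝕜) :
    rankOneProj x * rankOneProj y =
      ((star x ⬝ᵥ x)⁻¹ * (star y ⬝ᵥ y)⁻¹ * (star x ⬝ᵥ y)) • vecMulVec x (star y) := by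
  rw [rankOneProj, rankOneProj, smul_mul_smul, vecMulVec_mul_vecMulVec, vecMulVec_smul, smul_smul]

theorem rankOneProj_mul_eq_zero {x y : n → 𝕜} (h : star x ⬝ᵥ y = 0) :
    rankOneProj x * rankOneProj y = 0 := by
  simp [rankOneProj_mul_rankOneProj, h]

theorem isStarProjection_rankOneProj {x : n → 𝕜} (hx : x ≠ 0) :
    IsStarProjection (rankOneProj x) := by
  have hxx : star x ⬝ᵥ x ≠ 0 := dotProduct_star_self_eq_zero.not.mpr hx
  refine ⟨?_, ?_⟩
  · rw [IsIdempotentElem, rankOneProj_mul_rankOneProj, rankOneProj]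
    congr 1
    field_simp
  · rw [IsSelfAdjoint, rankOneProj, star_smul, star_eq_conjTranspose, conjTranspose_vecMulVec,
      star_star, star_inv₀, ← star_dotProduct]

theorem sum_rankOneProj_eq_one [DecidableEq n] {x : n → n → 𝕜} (hx : ∀ i, x i ≠ 0)
    (horth : Pairwise fun i j => star (x i) ⬝ᵥ x j = 0) :
    ∑ i, rankOneProj (x i) = 1 := by
  -- `D⁻¹ Aᴴ` is a left inverse of the square matrix `A` with columns `x i`, hence a right inverse.
  set A : Matrix n n 𝕜 := (of x)ᵀ
  set D : n → 𝕜 := fun i => star (x i) ⬝ᵥ x i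
  have hD : ∀ i, D i ≠ 0 := fun i => dotProduct_star_self_eq_zero.not.mpr (hx i)
  have hgram : Aᴴ * A = diagonal D := by
    ext i k
    rcases eq_or_ne i k with rfl | hik
    · simp [A, D, mul_apply, dotProduct]
    · simpa [A, mul_apply, dotProduct, hik] using horth hik
  have hsum : ∑ i, rankOneProj (x i) = A * (diagonal D⁻¹ * Aᴴ) := by
    ext j l
    simp only [rankOneProj, sum_apply, smul_apply, vecMulVec_apply, Pi.star_apply, smul_eq_mul,
      mul_apply, transpose_apply, of_apply, diagonal_apply, Pi.inv_apply, conjTranspose_apply,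
      ite_mul, zero_mul, Finset.sum_ite_eq, Finset.mem_univ, ↓reduceIte, A, D]
    exact Finset.sum_congr rfl fun c _ => by ring
  rw [hsum, mul_eq_one_comm_of_equiv (Equiv.refl n), Matrix.mul_assoc, hgram,
    diagonal_mul_diagonal]
  simp [hD]

end RankOneProj

theorem isStarProjection_single_one {n α : Type*} [Fintype n] [DecidableEq n] [Semiring α]
    [StarRing α] (i : n) : IsStarProjection (single i i (1 : α)) :=
  ⟨by simp [IsIdempotentElem], by simp [IsSelfAdjoint, star_eq_conjTranspose]⟩

section Compression

variable {m n α : Type*} [DecidableEq m] [CommRing α] [StarRing α]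

def compression [Fintype m] [Fintype n] (B : Matrix m n α) (hB : B * Bᴴ = 1) :
    Matrix m m α →⋆ₙ+* Matrix n n α where
  toFun A := Bᴴ * A * B
  map_zero' := by simp
  map_add' X Y := by simp [Matrix.mul_add, Matrix.add_mul]
  map_mul' X Y := by
    simp only [Matrix.mul_assoc]
    rw [← Matrix.mul_assoc B, hB, Matrix.one_mul]
  map_star' X := by simp [star_eq_conjTranspose, conjTranspose_mul, Matrix.mul_assoc]

theorem compression_apply [Fintype m] [Fintype n] (B : Matrix m n α) (hB : B * Bᴴ = 1)
    (A : Matrix m m α) : compression B hB A = Bᴴ * A * B :=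
  rfl

theorem submatrix_one_mul_conjTranspose [Fintype n] [DecidableEq n] {e : m → n}
    (he : Function.Injective e) :
    (1 : Matrix n n α).submatrix e id * ((1 : Matrix n n α).submatrix e id)ᴴ = 1 := by
  rw [conjTranspose_submatrix, conjTranspose_one, ← submatrix_mul _ _ _ _ _ Function.bijective_id,
    Matrix.one_mul, submatrix_one _ he]

theorem compression_single [Fintype m] [Fintype n] [DecidableEq n] (e : m → n)
    (hB : (1 : Matrix n n α).submatrix e id * ((1 : Matrix n n α).submatrix e id)ᴴ = 1)
    (a b : m) (c : α) :
    compression ((1 : Matrix n n α).submatrix e id) hB (single a b c) = single (e a) (e b) c := by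
  ext i j
  simp only [compression_apply, conjTranspose_submatrix, conjTranspose_one, mul_apply,
    submatrix_apply, one_apply, id_eq, single_apply, ite_and, mul_ite, ite_mul, one_mul, zero_mul,
    mul_zero, Finset.sum_ite_eq, Finset.mem_univ, ↓reduceIte, eq_comm, mul_one]
  rw [Finset.sum_eq_single b (fun x _ hx => by simp [Ne.symm hx]) (by simp)]
  by_cases hi : i = e a <;> by_cases hj : j = e b <;> simp [hi, hj]

end Compression

end Matrix

-- The first twenty bases are built from 33 vectors with entries in `{0, ±1, ±2}`; each of the
-- last sixteen completes an orthogonal pair of these vectors by their cross product.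
def kochenSpeckerBases : List (Fin 3 → Fin 3 → ℤ) :=
  [![![0, 0, 1], ![0, 1, 0], ![1, 0, 0]],
  ![![0, 0, 1], ![1, -2, 0], ![2, 1, 0]],
  ![![0, 0, 1], ![1, -1, 0], ![1, 1, 0]],
  ![![0, 0, 1], ![1, 2, 0], ![2, -1, 0]],
  ![![0, 1, -1], ![0, 1, 1], ![1, 0, 0]],
  ![![0, 1, -1], ![1, -1, -1], ![2, 1, 1]],
  ![![0, 1, -1], ![1, 1, 1], ![2, -1, -1]],
  ![![0, 1, 0], ![1, 0, -2], ![2, 0, 1]],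
  ![![0, 1, 0], ![1, 0, -1], ![1, 0, 1]],
  ![![0, 1, 0], ![1, 0, 2], ![2, 0, -1]],
  ![![0, 1, 1], ![1, -1, 1], ![2, 1, -1]],
  ![![0, 1, 1], ![1, 1, -1], ![2, -1, 1]],
  ![![1, -2, -1], ![1, 0, 1], ![1, 1, -1]],
  ![![1, -2, 1], ![1, 0, -1], ![1, 1, 1]],
  ![![1, -1, -2], ![1, -1, 1], ![1, 1, 0]],
  ![![1, -1, -1], ![1, -1, 2], ![1, 1, 0]],
  ![![1, -1, -1], ![1, 0, 1], ![1, 2, -1]],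
  ![![1, -1, 0], ![1, 1, -2], ![1, 1, 1]],
  ![![1, -1, 0], ![1, 1, -1], ![1, 1, 2]],
  ![![1, -1, 1], ![1, 0, -1], ![1, 2, 1]],
  ![![1, -2, -1], ![2, 1, 0], ![1, -2, 5]],
  ![![1, -2, 0], ![2, 1, -1], ![2, 1, 5]],
  ![![1, -2, 0], ![2, 1, 1], ![2, 1, -5]],
  ![![1, -2, 1], ![2, 1, 0], ![1, -2, -5]],
  ![![1, -1, -2], ![2, 0, 1], ![1, 5, -2]],
  ![![1, -1, 2], ![2, 0, -1], ![1, 5, 2]],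
  ![![1, 0, -2], ![2, -1, 1], ![2, 5, 1]],
  ![![1, 0, -2], ![2, 1, 1], ![2, -5, 1]],
  ![![1, 0, 2], ![2, -1, -1], ![2, 5, -1]],
  ![![1, 0, 2], ![2, 1, -1], ![2, -5, -1]],
  ![![1, 1, -2], ![2, 0, 1], ![1, -5, -2]],
  ![![1, 1, 2], ![2, 0, -1], ![1, -5, 2]],
  ![![1, 2, -1], ![2, -1, 0], ![1, 2, 5]],
  ![![1, 2, 0], ![2, -1, -1], ![2, -1, 5]],
  ![![1, 2, 0], ![2, -1, 1], ![2, -1, -5]],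
  ![![1, 2, 1], ![2, -1, 0], ![1, 2, -5]]]

theorem kochenSpeckerBases_orthogonal :
    ∀ b ∈ kochenSpeckerBases, (∀ i, b i ≠ 0) ∧ Pairwise fun i j => b i ⬝ᵥ b j = 0 := by
  unfold Pairwise
  decide

theorem not_exists_kochenSpecker_coloring :
    ¬ ∃ f : (Fin 3 → ℤ) → ℕ, ∀ b : Fin 3 → Fin 3 → ℤ, (∀ i, b i ≠ 0) →
      (Pairwise fun i j => b i ⬝ᵥ b j = 0) → ∑ i, f (b i) = 1 := by
  rintro ⟨f, hf⟩
  have h : ∀ b ∈ kochenSpeckerBases, ∑ i, f (b i) = 1 := fun b hb =>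
    hf b (kochenSpeckerBases_orthogonal b hb).1 (kochenSpeckerBases_orthogonal b hb).2
  simp only [kochenSpeckerBases, List.mem_cons, List.not_mem_nil, forall_eq_or_imp, or_false,
    forall_eq, Fin.sum_univ_three, cons_val] at h
  grind

namespace IsPiecewiseNonUnitalRingHom

theorem exists_single_eq_one {n α R : Type*} [Fintype n] [DecidableEq n] [CommRing α]
    [StarRing α] [Ring R] [IsDomain R] {ζ : Matrix n n α → R}
    (hζ : IsPiecewiseNonUnitalRingHom ζ) (h1 : ζ 1 = 1) : ∃ k, ζ (single k k 1) = 1 := by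
  have hsum := hζ.map_sum Finset.univ (fun k => single k k (1 : α))
    (fun k _ => (isStarProjection_single_one k).isSelfAdjoint)
    (fun k _ l _ hkl => (single_mul_single_of_ne _ _ _ _ hkl _).trans
      (single_mul_single_of_ne _ _ _ _ hkl.symm _).symm)
  rw [sum_single_one, h1] at hsum
  by_contra! hne
  have hzero : ∀ k ∈ Finset.univ, ζ (single k k (1 : α)) = 0 := fun k _ =>
    (hζ.map_eq_zero_or_one (isStarProjection_single_one k)).resolve_right (hne k)
  rw [Finset.sum_eq_zero hzero] at hsum
  exact one_ne_zero hsum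

theorem map_one_ne_one_fin_three {𝕜 R : Type*} [RCLike 𝕜] [Ring R] [IsDomain R] [CharZero R]
    {ζ : Matrix (Fin 3) (Fin 3) 𝕜 → R} (hζ : IsPiecewiseNonUnitalRingHom ζ) : ζ 1 ≠ 1 := by
  classical
  intro h1
  let P : (Fin 3 → ℤ) → Matrix (Fin 3) (Fin 3) 𝕜 := fun v => rankOneProj fun k => (v k : 𝕜)
  refine not_exists_kochenSpecker_coloring
    ⟨fun v => if ζ (P v) = 1 then 1 else 0, fun b hb horth => ?_⟩
  have hne : ∀ i, (fun k => (b i k : 𝕜)) ≠ 0 := fun i h =>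
    hb i (funext fun k => by simpa using congrFun h k)
  have horth' : Pairwise fun i j => star (fun k => (b i k : 𝕜)) ⬝ᵥ (fun k => (b j k : 𝕜)) = 0 :=
    fun i j hij => by simpa [dotProduct] using congrArg (Int.cast : ℤ → 𝕜) (horth hij)
  have hP : ∀ i, IsStarProjection (P (b i)) := fun i => isStarProjection_rankOneProj (hne i)
  have hsum : ∑ i, ζ (P (b i)) = 1 := by
    rw [← hζ.map_sum _ _ (fun i _ => (hP i).isSelfAdjoint)
      (fun i _ j _ hij => (rankOneProj_mul_eq_zero (horth' hij)).trans
        (rankOneProj_mul_eq_zero (horth' hij.symm)).symm),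
      sum_rankOneProj_eq_one hne horth', h1]
  have hval : ∀ i, ((if ζ (P (b i)) = 1 then 1 else 0 : ℕ) : R) = ζ (P (b i)) := fun i => by
    rcases hζ.map_eq_zero_or_one (hP i) with h | h <;> simp [h]
  exact_mod_cast (Finset.sum_congr rfl fun i _ => hval i).trans hsum

end IsPiecewiseNonUnitalRingHom

/-- Kochen–Specker: For `n ≥ 3` there is no piecewise `*`-homomorphism
`ℂ(Mₙ) → ℂ`, i.e. no map from normal `n × n` matrices to `ℂ` that is unital, involutive,
`ℂ`-homogeneous, and additive and multiplicative on all pairs of commuting normal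
matrices. -/
theorem stmt10 (n : ℕ) (hn : 3 ≤ n) :
    ¬ ∃ ζ : Matrix (Fin n) (Fin n) ℂ → ℂ,
      ζ 1 = 1 ∧
      (∀ a, IsStarNormal a → ζ (star a) = star (ζ a)) ∧
      (∀ (c : ℂ) a, IsStarNormal a → ζ (c • a) = c * ζ a) ∧
      (∀ a b, IsStarNormal a → IsStarNormal b → Commute a b →
        ζ (a + b) = ζ a + ζ b ∧ ζ (a * b) = ζ a * ζ b) := by
  rintro ⟨ζ, hone, -, -, hζ : IsPiecewiseNonUnitalRingHom ζ⟩
  obtain ⟨k, hk⟩ := hζ.exists_single_eq_one hone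
  obtain ⟨e, he, rfl⟩ : ∃ e : Fin 3 → Fin n, Function.Injective e ∧ e 0 = k :=
    ⟨Equiv.swap (Fin.castLE hn 0) k ∘ Fin.castLE hn,
      (Equiv.injective _).comp (Fin.castLE_injective hn), by simp⟩
  let φ := compression _ (submatrix_one_mul_conjTranspose (α := ℂ) he)
  refine (hζ.comp φ).map_one_ne_one_fin_three ?_
  refine (hζ.comp φ).eq_one_of_mul_eq (.one _) (isStarProjection_single_one 0) (one_mul _) ?_
  rwa [Function.comp_apply, compression_single]
end

section
/- Let $A$, $B$ be unital C*-algebras, and let $\zeta : \mathbb{C}(A) \to \mathbb{C}(B)$ be a piecewise $*$-homomorphism satisfying the conjugation condition $\zeta(\nu)^* \zeta(\alpha) \zeta(\nu) = \zeta(\nu^* \alpha \nu)$ for all unitaries $\nu$ and normal $\alpha$. Suppose the image of $\zeta$ generates $B$ as a C*-algebra. Then the function $c(\nu, \tau) := \zeta(\nu\tau)^* \zeta(\nu) \zeta(\tau)$ takes values in the center of the unitary group of $B$, and satisfies the 2-cocycle identity $c(\tau,\chi)\, c(\nu\tau, \chi)^*\, c(\nu, \tau\chi)\, c(\nu,\tau)^*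 = 1$ for all unitaries $\nu, \tau, \chi$ in $A$. -/
/-- Let `ζ : ℂ(A) → ℂ(B)` be a piecewise `*`-homomorphism between the normal
parts of unital C*-algebras satisfying the conjugation condition
`ζ(ν)* ζ(α) ζ(ν) = ζ(ν* α ν)` for unitary `ν` and normal `α`, and whose image generates `B`
as a C*-algebra. Then `c(ν,τ) := ζ(ντ)* ζ(ν) ζ(τ)` is a unitary in the centre of the unitary
group of `B` and satisfies the 2-cocycle identity
`c(τ,χ) c(ντ,χ)* c(ν,τχ) c(ν,τ)* = 1`. -/
theorem stmt14 (A B : Type*)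
    [NormedRing A] [StarRing A] [CStarRing A] [NormedAlgebra ℂ A] [StarModule ℂ A]
    [CompleteSpace A]
    [NormedRing B] [StarRing B] [CStarRing B] [NormedAlgebra ℂ B] [StarModule ℂ B]
    [CompleteSpace B]
    (ζ : A → B)
    (hnormal : ∀ a : A, IsStarNormal a → IsStarNormal (ζ a))
    (hmul : ∀ a b : A, IsStarNormal a → IsStarNormal b → Commute a b →
      ζ (a * b) = ζ a * ζ b)
    (hadd : ∀ a b : A, IsStarNormal a → IsStarNormal b → Commute a b →
      ζ (a + b) = ζ a + ζ b)
    (hsmul : ∀ (c : ℂ) (a : A), IsStarNormal a → ζ (c • a) = c • ζ a)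
    (hstar : ∀ a : A, IsStarNormal a → ζ (star a) = star (ζ a))
    (hone : ζ 1 = 1)
    (hconj : ∀ ν α : A, ν ∈ unitary A → IsStarNormal α →
      star (ζ ν) * ζ α * ζ ν = ζ (star ν * α * ν))
    (hgen : (StarAlgebra.adjoin ℂ (ζ '' {a : A | IsStarNormal a})).topologicalClosure = ⊤) :
    ∀ ν τ χ : A, ν ∈ unitary A → τ ∈ unitary A → χ ∈ unitary A →
      (star (ζ (ν * τ)) * ζ ν * ζ τ ∈ unitary B) ∧
      (∀ w : B, w ∈ unitary B → Commute (star (ζ (ν * τ)) * ζ ν * ζ τ) w) ∧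
      (star (ζ (τ * χ)) * ζ τ * ζ χ) *
        star (star (ζ (ν * τ * χ)) * ζ (ν * τ) * ζ χ) *
        (star (ζ (ν * (τ * χ))) * ζ ν * ζ (τ * χ)) *
        star (star (ζ (ν * τ)) * ζ ν * ζ τ) = 1 := by
  -- star of a normal element is normal
  have hstarnorm : ∀ a : A, IsStarNormal a → IsStarNormal (star a) := fun a ha =>
    ⟨by rw [star_star]; exact ha.star_comm_self.symm⟩
  -- unitaries are normal
  have hnormu : ∀ v : A, v ∈ unitary A → IsStarNormal v := fun v hv =>
    ⟨show star v * v = v * star v by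
      rw [(Unitary.mem_iff.mp hv).1, (Unitary.mem_iff.mp hv).2]⟩
  -- ζ sends unitaries to unitaries
  have hζu : ∀ v : A, v ∈ unitary A → ζ v ∈ unitary B := by
    intro v hv
    have hn := hnormu v hv
    have hns := hstarnorm v hn
    rw [Unitary.mem_iff]
    constructor
    · rw [← hstar v hn, ← hmul (star v) v hns hn hn.star_comm_self,
        (Unitary.mem_iff.mp hv).1, hone]
    · rw [← hstar v hn, ← hmul v (star v) hn hns hn.star_comm_self.symm,
        (Unitary.mem_iff.mp hv).2, hone]
  -- conjugation by a unitary preserves normality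
  have hconjnorm : ∀ (μ α : A), μ ∈ unitary A → IsStarNormal α →
      IsStarNormal (star μ * α * μ) := by
    intro μ α hμ hα
    have h1 : μ * star μ = 1 := (Unitary.mem_iff.mp hμ).2
    have h1' : ∀ x : A, μ * (star μ * x) = x := fun x => by
      rw [← mul_assoc, h1, one_mul]
    have key : ∀ β γ : A, (star μ * β * μ) * (star μ * γ * μ) = star μ * (β * γ) * μ := by
      intro β γ
      simp only [mul_assoc, h1']
    have hsx : star (star μ * α * μ) = star μ * star α * μ := by
      simp [star_mul, mul_assoc]
    refine ⟨?_⟩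
    show star (star μ * α * μ) * (star μ * α * μ) = (star μ * α * μ) * star (star μ * α * μ)
    rw [hsx, key, key, hα.star_comm_self]
  -- the cocycle values are central in B
  have hcen : ∀ μ τ' : A, μ ∈ unitary A → τ' ∈ unitary A →
      ∀ b : B, Commute (star (ζ (μ * τ')) * ζ μ * ζ τ') b := by
    intro μ τ' hμ hτ'
    have hμτ' : μ * τ' ∈ unitary A := mul_mem hμ hτ'
    have hu : ζ (μ * τ') ∈ unitary B := hζu _ hμτ'
    have hvB : ζ μ * ζ τ' ∈ unitary B := mul_mem (hζu _ hμ) (hζu _ hτ')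
    set u := ζ (μ * τ') with hu_def
    set v := ζ μ * ζ τ' with hv_def
    have hvv : v * star v = 1 := (Unitary.mem_iff.mp hvB).2
    have huu : u * star u = 1 := (Unitary.mem_iff.mp hu).2
    have hsu : star u * u = 1 := (Unitary.mem_iff.mp hu).1
    -- conjugation by v agrees with conjugation by u on the image of ζ
    have hagree : ∀ x : B, x ∈ ζ '' {a : A | IsStarNormal a} →
        star v * x * v = star u * x * u := by
      rintro x ⟨α, hα, rfl⟩
      have hα : IsStarNormal α := hα
      calc star v * ζ α * v
          = star (ζ τ') * (star (ζ μ) * ζ α * ζ μ) * ζ τ' := by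
            simp only [hv_def, star_mul, mul_assoc]
        _ = star (ζ τ') * ζ (star μ * α * μ) * ζ τ' := by rw [hconj μ α hμ hα]
        _ = ζ (star τ' * (star μ * α * μ) * τ') := hconj τ' _ hτ' (hconjnorm μ α hμ hα)
        _ = ζ (star (μ * τ') * α * (μ * τ')) := by congr 1; simp [star_mul, mul_assoc]
        _ = star u * ζ α * u := (hconj (μ * τ') α hμτ' hα).symm
    set e := v * star u with he_def
    -- e commutes with the image of ζ
    have he : ∀ x ∈ ζ '' {a : A | IsStarNormal a}, Commute e x := by
      intro x hx
      have h := hagree x hx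
      have cv : ∀ y : B, v * (star v * y) = y := fun y => by rw [← mul_assoc, hvv, one_mul]
      have l1 : v * (star v * x * v) * star u = x * (v * star u) := by
        simp only [mul_assoc, cv]
      have l2 : v * (star u * x * u) * star u = (v * star u) * x := by
        simp only [mul_assoc, huu, mul_one]
      show e * x = x * e
      rw [he_def, ← l2, ← l1, h]
    -- hence e commutes with the star subalgebra generated by the image
    have hpair : ∀ x ∈ StarAlgebra.adjoin ℂ (ζ '' {a : A | IsStarNormal a}),
        Commute e x ∧ Commute e (star x) := by
      intro x hx
      induction hx using StarAlgebra.adjoin_induction with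
      | mem x hx =>
        refine ⟨he x hx, ?_⟩
        obtain ⟨α, hα, rfl⟩ := hx
        rw [← hstar α hα]
        exact he _ ⟨star α, hstarnorm α hα, rfl⟩
      | algebraMap r =>
        exact ⟨(Algebra.commutes r e).symm,
          by rw [← algebraMap_star_comm]; exact (Algebra.commutes (star r) e).symm⟩
      | add x y hx hy ihx ihy =>
        exact ⟨ihx.1.add_right ihy.1, by rw [star_add]; exact ihx.2.add_right ihy.2⟩
      | mul x y hx hy ihx ihy =>
        exact ⟨ihx.1.mul_right ihy.1, by rw [star_mul]; exact ihy.2.mul_right ihx.2⟩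
      | star x hx ihx =>
        exact ⟨ihx.2, by rw [star_star]; exact ihx.1⟩
    -- and e commutes with everything in B, by density
    have he'' : ∀ x : B, Commute e x := by
      intro x
      have hx : x ∈ (StarAlgebra.adjoin ℂ (ζ '' {a : A | IsStarNormal a})).topologicalClosure := by
        rw [hgen]; trivial
      have hx2 : x ∈ closure
          ((StarAlgebra.adjoin ℂ (ζ '' {a : A | IsStarNormal a}) : StarSubalgebra ℂ B) : Set B) :=
        hx
      have hcl : IsClosed {y : B | e * y = y * e} :=
        isClosed_eq (continuous_const.mul continuous_id) (continuous_id.mul continuous_const)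
      exact closure_minimal (fun y hy => (hpair y hy).1) hcl hx2
    -- rewrite the cocycle in terms of e
    have h4 : v = u * (v * star u) := by
      have h3 := (he'' u).eq
      rwa [mul_assoc, hsu, mul_one] at h3
    have hcc : star u * v = v * star u := by
      nth_rewrite 1 [h4]
      rw [← mul_assoc, hsu, one_mul]
    intro b
    rw [show star u * ζ μ * ζ τ' = e from by rw [mul_assoc, ← hv_def, he_def, hcc]]
    exact he'' b
  -- the cocycle values are unitary
  have hcunit : ∀ μ τ' : A, μ ∈ unitary A → τ' ∈ unitary A →
      star (ζ (μ * τ')) * ζ μ * ζ τ' ∈ unitary B := fun μ τ' hμ hτ' =>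
    mul_mem (mul_mem (Unitary.star_mem (hζu _ (mul_mem hμ hτ'))) (hζu _ hμ)) (hζu _ hτ')
  -- the splitting identity ζμ ζτ' = ζ(μτ') c(μ,τ')
  have hsplit : ∀ μ τ' : A, μ ∈ unitary A → τ' ∈ unitary A →
      ζ μ * ζ τ' = ζ (μ * τ') * (star (ζ (μ * τ')) * ζ μ * ζ τ') := by
    intro μ τ' hμ hτ'
    have huu : ζ (μ * τ') * star (ζ (μ * τ')) = 1 :=
      (Unitary.mem_iff.mp (hζu _ (mul_mem hμ hτ'))).2
    rw [← mul_assoc, ← mul_assoc, huu, one_mul]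
  intro ν τ χ hν hτ hχ
  refine ⟨hcunit ν τ hν hτ, fun w _ => hcen ν τ hν hτ w, ?_⟩
  have hντ : ν * τ ∈ unitary A := mul_mem hν hτ
  have hτχ : τ * χ ∈ unitary A := mul_mem hτ hχ
  set c₁ := star (ζ (τ * χ)) * ζ τ * ζ χ with hc₁
  set c₂ := star (ζ (ν * τ * χ)) * ζ (ν * τ) * ζ χ with hc₂
  set c₃ := star (ζ (ν * (τ * χ))) * ζ ν * ζ (τ * χ) with hc₃
  set c₄ := star (ζ (ν * τ)) * ζ ν * ζ τ with hc₄
  have e1 : ζ ν * ζ τ * ζ χ = ζ (ν * τ * χ) * (c₂ * c₄) := by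
    calc ζ ν * ζ τ * ζ χ = (ζ (ν * τ) * c₄) * ζ χ := by rw [← hsplit ν τ hν hτ]
      _ = ζ (ν * τ) * ζ χ * c₄ := by
          rw [mul_assoc, ((hcen ν τ hν hτ) (ζ χ)).eq, ← mul_assoc]
      _ = (ζ (ν * τ * χ) * c₂) * c₄ := by rw [← hsplit (ν * τ) χ hντ hχ]
      _ = ζ (ν * τ * χ) * (c₂ * c₄) := mul_assoc _ _ _
  have e2 : ζ ν * ζ τ * ζ χ = ζ (ν * τ * χ) * (c₃ * c₁) := by
    calc ζ ν * ζ τ * ζ χ = ζ ν * (ζ (τ * χ) * c₁) := by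
          rw [mul_assoc, ← hsplit τ χ hτ hχ]
      _ = (ζ ν * ζ (τ * χ)) * c₁ := (mul_assoc _ _ _).symm
      _ = (ζ (ν * (τ * χ)) * c₃) * c₁ := by rw [← hsplit ν (τ * χ) hν hτχ]
      _ = ζ (ν * τ * χ) * (c₃ * c₁) := by rw [mul_assoc, ← mul_assoc ν τ χ]
  have hsζ : star (ζ (ν * τ * χ)) * ζ (ν * τ * χ) = 1 :=
    (Unitary.mem_iff.mp (hζu _ (mul_mem hντ hχ))).1
  have E : c₂ * c₄ = c₃ * c₁ := by
    have h := e1.symm.trans e2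
    calc c₂ * c₄ = star (ζ (ν * τ * χ)) * (ζ (ν * τ * χ) * (c₂ * c₄)) := by
          rw [← mul_assoc (star (ζ (ν * τ * χ))) (ζ (ν * τ * χ)) (c₂ * c₄), hsζ, one_mul]
      _ = star (ζ (ν * τ * χ)) * (ζ (ν * τ * χ) * (c₃ * c₁)) := by rw [h]
      _ = c₃ * c₁ := by
          rw [← mul_assoc (star (ζ (ν * τ * χ))) (ζ (ν * τ * χ)) (c₃ * c₁), hsζ, one_mul]
  have hc1 := hcen τ χ hτ hχ
  have h2l : star c₂ * c₂ = 1 := (Unitary.mem_iff.mp (hcunit (ν * τ) χ hντ hχ)).1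
  have h4r : c₄ * star c₄ = 1 := (Unitary.mem_iff.mp (hcunit ν τ hν hτ)).2
  calc c₁ * star c₂ * c₃ * star c₄
      = star c₂ * (c₃ * c₁) * star c₄ := by
        rw [(hc1 (star c₂)).eq, mul_assoc (star c₂), (hc1 c₃).eq]
    _ = star c₂ * (c₂ * c₄) * star c₄ := by rw [E]
    _ = 1 := by rw [← mul_assoc (star c₂) c₂ c₄, h2l, one_mul, h4r]
end

section
/- Let $A$ be a unital C*-algebra, $B$ a unital C*-algebra, and $\zeta : \mathbb{C}(M_2(\mathbb{C})) \to \mathbb{C}(B)$ a piecewise $*$-homomorphism satisfying $\zeta(\nu)^*\zeta(\alpha)\zeta(\nu) = \zeta(\nu^*\alpha\nu)$ for all unitaries $\nu$ and normal $\alpha$ in $M_2(\mathbb{C})$. Let $\sigma_x, \sigma_y$ be the Pauli matrices. Then $\zeta(\sigma_x)^2 = \zeta(\sigma_y)^2 = 1$ and $\zeta(\sigma_x)\zeta(\sigma_y) + \zeta(\sigma_y)\zeta(\sigma_x) = 0$. -/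
open Matrix

/-- The Pauli matrix `σ_x`. -/
noncomputable def pauliX : Matrix (Fin 2) (Fin 2) ℂ := !![0, 1; 1, 0]

/-- The Pauli matrix `σ_y`. -/
noncomputable def pauliY : Matrix (Fin 2) (Fin 2) ℂ := !![0, -Complex.I; Complex.I, 0]

lemma pauliX_star : star pauliX = pauliX := by
  ext i j
  fin_cases i <;> fin_cases j <;>
    simp [pauliX, Matrix.star_eq_conjTranspose, Matrix.conjTranspose_apply]

lemma pauliY_star : star pauliY = pauliY := by
  ext i j
  fin_cases i <;> fin_cases j <;>
    simp [pauliY, Matrix.star_eq_conjTranspose, Matrix.conjTranspose_apply]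

lemma pauliX_sq : pauliX * pauliX = 1 := by
  simp [pauliX, Matrix.mul_fin_two, Matrix.one_fin_two]

lemma pauliY_sq : pauliY * pauliY = 1 := by
  simp [pauliY, Matrix.mul_fin_two, Matrix.one_fin_two, Complex.I_mul_I]

lemma pauliX_normal : IsStarNormal pauliX := ⟨by rw [pauliX_star]⟩

lemma pauliY_normal : IsStarNormal pauliY := ⟨by rw [pauliY_star]⟩

lemma pauliY_unitary : pauliY ∈ unitary (Matrix (Fin 2) (Fin 2) ℂ) := by
  constructor <;> rw [pauliY_star] <;> exact pauliY_sq

lemma pauli_conj : star pauliY * pauliX * pauliY = (-1 : ℂ) • pauliX := by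
  rw [pauliY_star]
  ext i j
  fin_cases i <;> fin_cases j <;>
    simp [pauliX, pauliY, Matrix.mul_fin_two, Complex.I_mul_I]

/-- If `ζ : ℂ(M₂(ℂ)) → ℂ(B)` is a piecewise `*`-homomorphism into a unital
C*-algebra `B` satisfying `ζ(ν)* ζ(α) ζ(ν) = ζ(ν* α ν)` for unitary `ν` and normal `α`,
then `ζ(σ_x)² = ζ(σ_y)² = 1` and `ζ(σ_x) ζ(σ_y) + ζ(σ_y) ζ(σ_x) = 0`. -/
theorem stmt15 (B : Type*)
    [NormedRing B] [StarRing B] [CStarRing B] [NormedAlgebra ℂ B] [StarModule ℂ B]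
    [CompleteSpace B]
    (ζ : Matrix (Fin 2) (Fin 2) ℂ → B)
    (hnormal : ∀ a, IsStarNormal a → IsStarNormal (ζ a))
    (hmul : ∀ a b, IsStarNormal a → IsStarNormal b → Commute a b →
      ζ (a * b) = ζ a * ζ b)
    (hadd : ∀ a b, IsStarNormal a → IsStarNormal b → Commute a b →
      ζ (a + b) = ζ a + ζ b)
    (hsmul : ∀ (c : ℂ) a, IsStarNormal a → ζ (c • a) = c • ζ a)
    (hstar : ∀ a, IsStarNormal a → ζ (star a) = star (ζ a))
    (hone : ζ 1 = 1)
    (hconj : ∀ ν α, ν ∈ unitary (Matrix (Fin 2) (Fin 2) ℂ) → IsStarNormal α →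
      star (ζ ν) * ζ α * ζ ν = ζ (star ν * α * ν)) :
    ζ pauliX ^ 2 = 1 ∧ ζ pauliY ^ 2 = 1 ∧
      ζ pauliX * ζ pauliY + ζ pauliY * ζ pauliX = 0 := by
  have hx2 : ζ pauliX ^ 2 = 1 := by
    rw [sq, ← hmul _ _ pauliX_normal pauliX_normal rfl, pauliX_sq, hone]
  have hy2 : ζ pauliY ^ 2 = 1 := by
    rw [sq, ← hmul _ _ pauliY_normal pauliY_normal rfl, pauliY_sq, hone]
  refine ⟨hx2, hy2, ?_⟩
  have key : star (ζ pauliY) * ζ pauliX * ζ pauliY = -ζ pauliX := by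
    rw [hconj _ _ pauliY_unitary pauliX_normal, pauli_conj,
      hsmul _ _ pauliX_normal, neg_one_smul]
  rw [← hstar _ pauliY_normal, pauliY_star] at key
  have := congrArg (· * ζ pauliY) key
  simp only [mul_assoc] at this
  rw [← sq, hy2, mul_one] at this
  rw [this]
  rw [neg_mul, add_neg_cancel]
end

section
/- A continuous map $f : X \to Y$ between compact Hausdorff spaces is a regular monomorphism if and only if it is injective. In particular, for injective $f$, the square with both legs $f$ and pushout $X \xrightarrow{f} Y \rightrightarrows Y \sqcup_X Y$ exhibits $X$ as the equalizer of the two pushout inclusions $Y \to Y \sqcup_X Y$. -/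
open CategoryTheory CategoryTheory.Limits

attribute [local instance] ConcreteCategory.instFunLike

/-!
An injective map `f : X ⟶ Y` of compact Hausdorff spaces is a closed embedding, so every map
whose image lies in the image of `f` factors continuously through `f`. If `y ∉ range f`, Urysohn's
lemma gives two maps `Y ⟶ [0, 1]` that agree on the closed set `range f` but not at `y`; they
induce a map out of the pushout `Y ⊔_X Y` separating the two images of `y`. Hence the equalizer
of the two pushout inclusions is exactly `range f ≅ X`.
-/

namespace CompHaus

universe u

lemma exists_hom_eqOn_ne_of_notMem {Y : CompHaus.{u}} {C : Set Y} (hC : IsClosed C) {y : Y}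
    (hy : y ∉ C) : ∃ (I : CompHaus.{u}) (φ ψ : Y ⟶ I), Set.EqOn φ ψ C ∧ φ y ≠ ψ y := by
  have : T1Space Y := T2Space.t1Space
  have : NormalSpace Y := @NormalSpace.of_compactSpace_r1Space _ _ _ T2Space.r1Space
  obtain ⟨g, hg0, hg1, hg01⟩ := exists_continuous_zero_one_of_isClosed hC isClosed_singleton
    (Set.disjoint_singleton_right.mpr hy)
  refine ⟨of (ULift.{u} unitInterval),
    CompHausLike.ofHom _
      ⟨fun z => ⟨⟨g z, hg01 z⟩⟩, continuous_uliftUp.comp (g.continuous.subtype_mk _)⟩,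
    CompHausLike.ofHom _ ⟨fun _ => ⟨0⟩, continuous_const⟩, fun z hz => ?_, fun h => ?_⟩
  · exact congrArg ULift.up (Subtype.ext (hg0 hz))
  · simpa [hg1 rfl] using congrArg (fun a => a.down.val) h

lemma mem_range_of_pushout_inl_eq_inr {X Y : CompHaus.{u}} (f : X ⟶ Y) {y : Y}
    (hy : pushout.inl f f y = pushout.inr f f y) : y ∈ Set.range f := by
  by_contra hyf
  obtain ⟨I, φ, ψ, hφψ, hne⟩ := exists_hom_eqOn_ne_of_notMem
    (isCompact_range f.hom.hom.continuous).isClosed hyf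
  have hw : f ≫ φ = f ≫ ψ := by
    ext x
    exact hφψ ⟨x, rfl⟩
  apply hne
  calc φ y = pushout.desc φ ψ hw (pushout.inl f f y) :=
        (ConcreteCategory.congr_hom (pushout.inl_desc φ ψ hw) y).symm
    _ = pushout.desc φ ψ hw (pushout.inr f f y) := by rw [hy]
    _ = ψ y := ConcreteCategory.congr_hom (pushout.inr_desc φ ψ hw) y

lemma isEmbedding_of_injective {X Y : CompHaus.{u}} (f : X ⟶ Y) (hf : Function.Injective f) :
    Topology.IsEmbedding f :=
  (f.hom.hom.continuous.isClosedEmbedding hf).isEmbedding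

noncomputable def liftOfRangeSubset {X Y Z : CompHaus.{u}} (f : X ⟶ Y)
    (hf : Function.Injective f) (g : Z ⟶ Y) (hg : Set.range g ⊆ Set.range f) : Z ⟶ X :=
  CompHausLike.ofHom _ ⟨(isEmbedding_of_injective f hf).toHomeomorph.symm ∘
    Set.codRestrict g _ fun z => hg ⟨z, rfl⟩, by fun_prop⟩

lemma liftOfRangeSubset_comp {X Y Z : CompHaus.{u}} (f : X ⟶ Y) (hf : Function.Injective f)
    (g : Z ⟶ Y) (hg : Set.range g ⊆ Set.range f) : liftOfRangeSubset f hf g hg ≫ f = g := by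
  ext z
  exact congrArg Subtype.val ((isEmbedding_of_injective f hf).toHomeomorph.apply_symm_apply _)

noncomputable def isLimitForkPushoutOfInjective {X Y : CompHaus.{u}} (f : X ⟶ Y)
    (hf : Function.Injective f) : IsLimit (Fork.ofι f (pushout.condition (f := f) (g := f))) :=
  haveI : Mono f := (CompHausLike.mono_iff_injective f).mpr hf
  Fork.IsLimit.mk _
    (fun s => liftOfRangeSubset f hf s.ι <| by
      rintro _ ⟨w, rfl⟩
      exact mem_range_of_pushout_inl_eq_inr f (ConcreteCategory.congr_hom s.condition w))
    (fun s => liftOfRangeSubset_comp f hf _ _)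
    (fun s m hm => by
      rw [← cancel_mono f]
      exact hm.trans (liftOfRangeSubset_comp f hf _ _).symm)

end CompHaus

/-- A continuous map between compact Hausdorff spaces is a regular
monomorphism iff it is injective; and for injective `f : X → Y`, `X` is the equalizer of
the two inclusions of `Y` into the pushout `Y ⊔_X Y`. -/
theorem stmt18 (X Y : CompHaus) (f : X ⟶ Y) :
    (Nonempty (RegularMono f) ↔ Function.Injective ⇑f) ∧
    (Function.Injective ⇑f →
      Nonempty (IsLimit (Fork.ofι f (pushout.condition (f := f) (g := f))))) :=
  ⟨⟨fun ⟨h⟩ => (CompHausLike.mono_iff_injective f).mp h.mono,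
    fun hf => ⟨⟨_, _, _, _, CompHaus.isLimitForkPushoutOfInjective f hf⟩⟩⟩,
   fun hf => ⟨CompHaus.isLimitForkPushoutOfInjective f hf⟩⟩
end
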